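/- arXiv:2104.14083 — 10 statements merged into one kernel-verified Lean document; each statement's English description precedes it below -/
import Mathlib

section
/- In the ring R = ℝ[ϖ_1,…,ϖ_{n-1}]/I, where I is the ideal generated by the elements α_i·ϖ_i for 1 ≤ i ≤ n-1 with α_i := -ϖ_{i-1} + 2ϖ_i - ϖ_{i+1} (convention ϖ_0 = ϖ_n = 0), for all 1 ≤ a ≤ i ≤ b ≤ n-1 the following identity holds: (ϖ_a ϖ_{a+1} ⋯ ϖ_i)·(ϖ_i ϖ_{i+1} ⋯ ϖ_b) = ((b-i+1)/(b-a+2))·ϖ_{a-1} ϖ_a ⋯ ϖ_b + ((i-a+1)/(b-a+2))·ϖ_a ϖ_{a+1} ⋯ ϖ_{b+1}. -/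
/-!
Put `P = ϖ_a ⋯ ϖ_b`. Both sides only involve the classes of `ϖ_j P` for `j = a - 1, i, b + 1`,
since the left-hand side is `ϖ_i P`. For `a ≤ j ≤ b` the relation `α_j ϖ_j = 0` multiplied by
`P / ϖ_j` says that `j ↦ [ϖ_j P]` has vanishing second difference at `j`; hence it is an
arithmetic progression on `a - 1 ≤ j ≤ b + 1`, and the identity is linear interpolation between
its endpoints.
-/

open MvPolynomial Finset

namespace Finset

variable {M : Type*} [CommMonoid M] (f : ℕ → M)

theorem prod_Icc_mul_prod_Icc_eq_mul_prod_Icc {a i b : ℕ} (hai : a ≤ i) (hib : i ≤ b) :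
    (∏ k ∈ Icc a i, f k) * ∏ k ∈ Icc i b, f k = f i * ∏ k ∈ Icc a b, f k := by
  rw [← mul_prod_Ioc_eq_prod_Icc hib, mul_left_comm, ← mul_prod_Ioc_eq_prod_Icc hai, mul_assoc,
    prod_Ioc_consecutive f hai hib, mul_prod_Ioc_eq_prod_Icc (hai.trans hib)]

theorem prod_Icc_sub_one_left {a b : ℕ} (ha : 1 ≤ a) (hab : a ≤ b + 1) :
    ∏ k ∈ Icc (a - 1) b, f k = f (a - 1) * ∏ k ∈ Icc a b, f k := by
  obtain ⟨c, rfl⟩ := Nat.exists_eq_add_of_le' ha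
  rw [Nat.add_sub_cancel, ← mul_prod_Ioc_eq_prod_Icc (by omega), Icc_add_one_left_eq_Ioc]

end Finset

theorem apply_eq_add_nsmul_of_sub_eq_sub {M : Type*} [AddCommGroup M] {f : ℕ → M} {q : ℕ}
    (h : ∀ m, m + 2 ≤ q → f (m + 2) - f (m + 1) = f (m + 1) - f m) :
    ∀ m ≤ q, f m = f 0 + m • (f 1 - f 0) := by
  have hdiff : ∀ m, m + 1 ≤ q → f (m + 1) - f m = f 1 - f 0 := by
    intro m
    induction m with
    | zero => simp
    | succ m ih => exact fun hm => (h m hm).trans (ih (by omega))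
  intro m
  induction m with
  | zero => simp
  | succ m ih =>
    intro hm
    rw [succ_nsmul, ← add_assoc, ← ih (by omega), ← hdiff m hm, add_sub_cancel]

theorem apply_eq_smul_add_smul_of_sub_eq_sub {K M : Type*} [Field K] [CharZero K] [AddCommGroup M]
    [Module K M] {f : ℕ → M} {q : ℕ} (hq : q ≠ 0)
    (h : ∀ m, m + 2 ≤ q → f (m + 2) - f (m + 1) = f (m + 1) - f m) {p : ℕ} (hp : p ≤ q) :
    f p = (((q : K) - p) / q) • f 0 + ((p : K) / q) • f q := by
  have hqK : (q : K) ≠ 0 := Nat.cast_ne_zero.2 hq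
  rw [apply_eq_add_nsmul_of_sub_eq_sub h p hp, apply_eq_add_nsmul_of_sub_eq_sub h q le_rfl,
    ← Nat.cast_smul_eq_nsmul K, ← Nat.cast_smul_eq_nsmul K]
  match_scalars <;> field_simp
  ring

theorem Ideal.Quotient.mk_sub_mk_eq_of_mul_mem {R : Type*} [CommRing R] {I : Ideal R}
    {x y z P : R} (hrel : (-x + 2 * y - z) * y ∈ I) (hP : y ∣ P) :
    mk I (z * P) - mk I (y * P) = mk I (y * P) - mk I (x * P) := by
  obtain ⟨Q, rfl⟩ := hP
  have h0 : mk I ((-x + 2 * y - z) * y * Q) = 0 :=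
    Ideal.Quotient.eq_zero_iff_mem.2 (I.mul_mem_right Q hrel)
  simp only [map_mul, map_sub, map_add, map_neg, map_ofNat] at h0 ⊢
  linear_combination -h0

theorem stmt_0_general (n : ℕ)
    (ϖ : ℕ → MvPolynomial ℕ ℝ)
    (I : Ideal (MvPolynomial ℕ ℝ))
    (hI : I = Ideal.span
      {p | ∃ k, 1 ≤ k ∧ k ≤ n - 1 ∧
        p = (-ϖ (k - 1) + 2 * ϖ k - ϖ (k + 1)) * ϖ k})
    (a i b : ℕ) (ha : 1 ≤ a) (hai : a ≤ i) (hib : i ≤ b) (hb : b ≤ n - 1) :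
    Ideal.Quotient.mk I ((∏ k ∈ Finset.Icc a i, ϖ k) * ∏ k ∈ Finset.Icc i b, ϖ k) =
      (((b : ℝ) - i + 1) / ((b : ℝ) - a + 2)) •
          Ideal.Quotient.mk I (∏ k ∈ Finset.Icc (a - 1) b, ϖ k) +
        (((i : ℝ) - a + 1) / ((b : ℝ) - a + 2)) •
          Ideal.Quotient.mk I (∏ k ∈ Finset.Icc a (b + 1), ϖ k) := by
  set P := ∏ k ∈ Icc a b, ϖ k
  set f : ℕ → MvPolynomial ℕ ℝ ⧸ I := fun m => Ideal.Quotient.mk I (ϖ (a - 1 + m) * P) with hf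
  have hrel : ∀ m, m + 2 ≤ b - a + 2 → f (m + 2) - f (m + 1) = f (m + 1) - f m := by
    intro m hm
    set j := a - 1 + (m + 1)
    have hgen : (-ϖ (j - 1) + 2 * ϖ j - ϖ (j + 1)) * ϖ j ∈ I :=
      hI ▸ Ideal.subset_span ⟨j, by omega, by omega, rfl⟩
    have hjP : ϖ j ∣ P := dvd_prod_of_mem ϖ (mem_Icc.2 ⟨by omega, by omega⟩)
    -- `j - 1` and `j + 1` are `a - 1 + m` and `a - 1 + (m + 2)` definitionally
    exact Ideal.Quotient.mk_sub_mk_eq_of_mul_mem hgen hjP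
  have key := apply_eq_smul_add_smul_of_sub_eq_sub (K := ℝ) (by omega : b - a + 2 ≠ 0) hrel
    (p := i - a + 1) (by omega)
  rw [Nat.cast_add, Nat.cast_add, Nat.cast_sub hai, Nat.cast_sub (hai.trans hib)] at key
  simp only [hf, show a - 1 + (i - a + 1) = i by omega, show a - 1 + (b - a + 2) = b + 1 by omega,
    add_zero] at key
  rw [prod_Icc_mul_prod_Icc_eq_mul_prod_Icc ϖ hai hib, prod_Icc_sub_one_left ϖ ha (by omega),
    prod_Icc_succ_top (by omega), mul_comm _ (ϖ (b + 1)), key]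
  congr 2 <;> push_cast <;> ring

/-- Lemma 4.4 (AHKZ Lemma 5.1): the type-A Peterson ring relation. -/
theorem stmt_0 (n : ℕ) (hn : 2 ≤ n)
    (ϖ : ℕ → MvPolynomial ℕ ℝ)
    (hϖ : ∀ k, ϖ k = if 1 ≤ k ∧ k ≤ n - 1 then X k else 0)
    (I : Ideal (MvPolynomial ℕ ℝ))
    (hI : I = Ideal.span
      {p | ∃ k, 1 ≤ k ∧ k ≤ n - 1 ∧
        p = (-ϖ (k - 1) + 2 * ϖ k - ϖ (k + 1)) * ϖ k})
    (a i b : ℕ) (ha : 1 ≤ a) (hai : a ≤ i) (hib : i ≤ b) (hb : b ≤ n - 1) :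
    Ideal.Quotient.mk I ((∏ k ∈ Finset.Icc a i, ϖ k) * ∏ k ∈ Finset.Icc i b, ϖ k) =
      (((b : ℝ) - i + 1) / ((b : ℝ) - a + 2)) •
          Ideal.Quotient.mk I (∏ k ∈ Finset.Icc (a - 1) b, ϖ k) +
        (((i : ℝ) - a + 1) / ((b : ℝ) - a + 2)) •
          Ideal.Quotient.mk I (∏ k ∈ Finset.Icc a (b + 1), ϖ k) :=
  stmt_0_general n ϖ I hI a i b ha hai hib hb
end

section
/- In the ring R = ℝ[ϖ_1,…,ϖ_{n-1}]/(α_i ϖ_i : 1 ≤ i ≤ n-1) with α_i := -ϖ_{i-1} + 2ϖ_i - ϖ_{i+1} and ϖ_0 = ϖ_n = 0, for every 1 ≤ k ≤ n-1 one has ϖ_1^k = (1/k!)·ϖ_1 ϖ_2 ⋯ ϖ_k. -/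
open MvPolynomial Finset

set_option maxHeartbeats 1000000 in
set_option synthInstance.maxHeartbeats 400000 in
theorem stmt_1 (n : ℕ) (hn : 2 ≤ n)
    (ϖ : ℕ → MvPolynomial ℕ ℝ)
    (hϖ : ∀ k, ϖ k = if 1 ≤ k ∧ k ≤ n - 1 then X k else 0)
    (I : Ideal (MvPolynomial ℕ ℝ))
    (hI : I = Ideal.span
      {p | ∃ k, 1 ≤ k ∧ k ≤ n - 1 ∧
        p = (-ϖ (k - 1) + 2 * ϖ k - ϖ (k + 1)) * ϖ k})
    (k : ℕ) (hk1 : 1 ≤ k) (hk2 : k ≤ n - 1) :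
    Ideal.Quotient.mk I (ϖ 1 ^ k) =
      ((1 : ℝ) / (Nat.factorial k : ℝ)) •
        Ideal.Quotient.mk I (∏ j ∈ Finset.Icc 1 k, ϖ j) := by
  let q := Ideal.Quotient.mk I
  have hw0 : q (ϖ 0) = 0 := by
    rw [hϖ 0]; simp
  have rel : ∀ j, 1 ≤ j → j ≤ n - 1 →
      q (ϖ (j-1)) * q (ϖ j) + q (ϖ j) * q (ϖ (j+1)) = 2 * (q (ϖ j) * q (ϖ j)) := by
    intro j hj1 hj2
    have hmem : (-ϖ (j - 1) + 2 * ϖ j - ϖ (j + 1)) * ϖ j ∈ I := by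
      rw [hI]; exact Ideal.subset_span ⟨j, hj1, hj2, rfl⟩
    have h0 : q ((-ϖ (j - 1) + 2 * ϖ j - ϖ (j + 1)) * ϖ j) = 0 :=
      (Ideal.Quotient.eq_zero_iff_mem).2 hmem
    have h1 : (-(q (ϖ (j-1))) + 2 * q (ϖ j) - q (ϖ (j+1))) * q (ϖ j) = 0 := by
      simpa [map_mul, map_add, map_sub, map_neg, (by exact map_ofNat q 2 : q 2 = 2)] using h0
    linear_combination -h1
  have keyB : ∀ m, m ≤ n - 1 →
      ((m+1 : ℕ) : ℝ) • ((∏ j ∈ Finset.Icc 1 m, q (ϖ j)) * q (ϖ 1))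
        = (∏ j ∈ Finset.Icc 1 m, q (ϖ j)) * q (ϖ (m+1)) := by
    intro m hm
    set P := ∏ j ∈ Finset.Icc 1 m, q (ϖ j) with hP
    have E : ∀ j, j ≤ m →
        P * q (ϖ j) = ((j:ℕ):ℝ) • (P * q (ϖ 1)) ∧
        P * q (ϖ (j+1)) = ((j+1:ℕ):ℝ) • (P * q (ϖ 1)) := by
      intro j
      induction j with
      | zero =>
        intro _
        constructor
        · simp only [hw0, mul_zero, Nat.cast_zero, zero_smul]
        · norm_num
      | succ j ih =>
        intro hjm
        have hij := ih (Nat.le_of_succ_le hjm)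
        refine ⟨hij.2, ?_⟩
        have hmem : (j+1) ∈ Finset.Icc 1 m := by
          simp only [Finset.mem_Icc]; omega
        have hPsplit : P = (∏ i ∈ (Finset.Icc 1 m).erase (j+1), q (ϖ i)) * q (ϖ (j+1)) := by
          rw [hP, ← Finset.mul_prod_erase _ _ hmem, mul_comm]
        have hrel := rel (j+1) (by omega) (by omega)
        have hj1 : j + 1 - 1 = j := rfl
        rw [hj1] at hrel
        have hstep : P * q (ϖ (j+1+1)) = 2 * (P * q (ϖ (j+1))) - P * q (ϖ j) := by
          rw [hPsplit]
          linear_combination (∏ i ∈ (Finset.Icc 1 m).erase (j+1), q (ϖ i)) * hrel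
        rw [hstep, hij.1, hij.2]
        rw [two_mul, ← add_smul, ← sub_smul]
        congr 1
        push_cast
        ring
    exact ((E m le_rfl).2).symm
  have main : ∀ m, 1 ≤ m → m ≤ n - 1 →
      q (ϖ 1) ^ m = ((1:ℝ)/(m.factorial:ℝ)) • ∏ j ∈ Finset.Icc 1 m, q (ϖ j) := by
    intro m hm1
    induction m, hm1 using Nat.le_induction with
    | base => intro _; simp
    | succ m hm ih =>
      intro hm2
      have hmn : m ≤ n - 1 := by omega
      have h1 := ih hmn
      have hB := keyB m hmn
      have hne : ((m+1:ℕ):ℝ) ≠ 0 := by positivity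
      have h2 : (∏ j ∈ Finset.Icc 1 m, q (ϖ j)) * q (ϖ (m+1))
          = ∏ j ∈ Finset.Icc 1 (m+1), q (ϖ j) := by
        rw [Finset.prod_Icc_succ_top (by omega)]
      have h3 : (∏ j ∈ Finset.Icc 1 m, q (ϖ j)) * q (ϖ 1)
          = (((m+1:ℕ):ℝ))⁻¹ • ∏ j ∈ Finset.Icc 1 (m+1), q (ϖ j) := by
        rw [← h2, ← hB, inv_smul_smul₀ hne]
      calc q (ϖ 1) ^ (m+1) = q (ϖ 1) ^ m * q (ϖ 1) := by ring
        _ = ((1:ℝ)/(m.factorial:ℝ)) • ((∏ j ∈ Finset.Icc 1 m, q (ϖ j)) * q (ϖ 1)) := by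
            rw [h1, smul_mul_assoc]
        _ = ((1:ℝ)/(m.factorial:ℝ)) • ((((m+1:ℕ):ℝ))⁻¹ • ∏ j ∈ Finset.Icc 1 (m+1), q (ϖ j)) := by
            rw [h3]
        _ = ((1:ℝ)/((m+1).factorial:ℝ)) • ∏ j ∈ Finset.Icc 1 (m+1), q (ϖ j) := by
            rw [smul_smul]
            congr 1
            have hf : (m.factorial : ℝ) ≠ 0 := by positivity
            rw [Nat.factorial_succ]
            push_cast
            field_simp
  have := main k hk1 hk2
  rw [map_pow, map_prod]
  exact this
end

section
/- Let R = ℝ[ϖ_1,…,ϖ_n]/(α_i ϖ_i : 1 ≤ i ≤ n) where α_i = -ϖ_{i-1} + 2ϖ_i - ϖ_{i+1} for 1 ≤ i ≤ n-2, α_{n-1} = -ϖ_{n-2} + 2ϖ_{n-1} - 2ϖ_n, and α_n = -ϖ_{n-1} + 2ϖ_n (type B_n Cartan relations; ϖ_0 = 0). Then for all 1 ≤ a ≤ i ≤ n-1, one has ϖ_i · (ϖ_a ϖ_{a+1} ⋯ ϖ_{n-1}) = ((n-i)/(n-a+1)) · ϖ_{a-1} ϖ_a ⋯ ϖ_{n-1}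 + (2(i-a+1)/(n-a+1)) · ϖ_a ϖ_{a+1} ⋯ ϖ_n. -/
open MvPolynomial Finset

/-!
Put `P = ϖ_a ⋯ ϖ_{n-1}` and `x_k = ϖ_k P` in `R`. For `a ≤ k ≤ n - 1` the factor `ϖ_k` divides
`P`, so `α_k P = 0` in `R`. For `k ≤ n - 2` this says that `x_{k-1}, x_k, x_{k+1}` are in
arithmetic progression, hence `x_k = x_{a-1} + (k - a + 1) d` on `[a - 1, n - 1]`. The relation
for `k = n - 1` then gives `2 x_n = x_{a-1} + (n - a + 1) d`, and eliminating `d` yields the formula.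
-/

section ArithmeticProgression

variable {M : Type*} [AddCommGroup M] {x : ℕ → M} {m N : ℕ}

theorem sub_eq_sub_base_of_sub_eq_sub_pred
    (h : ∀ k, m < k → k < m + N → x (k + 1) - x k = x k - x (k - 1)) :
    ∀ k, m ≤ k → k < m + N → x (k + 1) - x k = x (m + 1) - x m := by
  intro k hmk
  induction k, hmk using Nat.le_induction with
  | base => exact fun _ => rfl
  | succ k hmk ih =>
    intro hk
    rw [h (k + 1) (by omega) hk, Nat.add_sub_cancel]
    exact ih (by omega)

theorem eq_add_smul_of_sub_eq_sub_pred {K : Type*} [CommRing K] [Module K M]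
    (h : ∀ k, m < k → k < m + N → x (k + 1) - x k = x k - x (k - 1)) :
    ∀ k, m ≤ k → k ≤ m + N → x k = x m + ((k : K) - m) • (x (m + 1) - x m) := by
  intro k hmk
  induction k, hmk using Nat.le_induction with
  | base => simp
  | succ k hmk ih =>
    intro hk
    have step := sub_eq_sub_base_of_sub_eq_sub_pred h k hmk (by omega)
    rw [sub_eq_iff_eq_add, ih (by omega)] at step
    rw [step]
    push_cast
    module

end ArithmeticProgression

theorem add_smul_eq_div_smul_add_div_smul {K M : Type*} [Field K] [AddCommGroup M] [Module K M]
    {x₀ d y : M} {N t : K} (hN : N ≠ 0) (hy : (2 : K) • y = x₀ + N • d) :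
    x₀ + t • d = ((N - t) / N) • x₀ + (2 * t / N) • y := by
  rw [show 2 * t / N = t / N * 2 by ring, ← smul_smul, hy]
  match_scalars <;> field_simp; ring

theorem eq_div_smul_add_div_smul_of_sub_eq_sub_pred {K M : Type*} [Field K] [CharZero K]
    [AddCommGroup M] [Module K M] {x : ℕ → M} {m p i : ℕ}
    (hrec : ∀ k, m < k → k ≤ p → x (k + 1) - x k = x k - x (k - 1))
    (hlast : x (p + 2) + x (p + 2) = x (p + 1) + x (p + 1) - x p) (hmi : m < i) (hip : i ≤ p + 1) :
    x i = (((p : K) + 2 - i) / ((p : K) + 2 - m)) • x m +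
      (2 * ((i : K) - m) / ((p : K) + 2 - m)) • x (p + 2) := by
  have harith := eq_add_smul_of_sub_eq_sub_pred (K := K) (N := p + 1 - m)
    fun k h1 h2 => hrec k h1 (by omega)
  have hy : (2 : K) • x (p + 2) = x m + ((p : K) + 2 - m) • (x (m + 1) - x m) := by
    rw [two_smul, hlast, harith (p + 1) (by omega) (by omega), harith p (by omega) (by omega)]
    push_cast
    module
  have hN : (p : K) + 2 - m ≠ 0 := by
    rw [show (p : K) + 2 - m = ((p + 2 - m : ℕ) : K) by push_cast [show m ≤ p + 2 by omega]; ring]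
    exact_mod_cast (show p + 2 - m ≠ 0 by omega)
  rw [harith i hmi.le (by omega), add_smul_eq_div_smul_add_div_smul hN hy]
  congr 3
  ring

theorem Ideal.Quotient.mk_mul_prod_eq_zero {R ι : Type*} [CommRing R] {I : Ideal R}
    {s : Finset ι} {f : ι → R} {q : R} {k : ι} (hk : k ∈ s) (h : q * f k ∈ I) :
    Ideal.Quotient.mk I (q * ∏ j ∈ s, f j) = 0 :=
  Ideal.Quotient.eq_zero_iff_mem.2 (I.mem_of_dvd (mul_dvd_mul_left q (dvd_prod_of_mem f hk)) h)

theorem stmt_3_general (n : ℕ)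
    (ϖ : ℕ → MvPolynomial ℕ ℝ)
    (α : ℕ → MvPolynomial ℕ ℝ)
    (hα1 : ∀ k, 1 ≤ k → k ≤ n - 2 → α k = -ϖ (k - 1) + 2 * ϖ k - ϖ (k + 1))
    (hα2 : α (n - 1) = -ϖ (n - 2) + 2 * ϖ (n - 1) - 2 * ϖ n)
    (I : Ideal (MvPolynomial ℕ ℝ))
    (hI : I = Ideal.span {p | ∃ k, 1 ≤ k ∧ k ≤ n ∧ p = α k * ϖ k})
    (a i : ℕ) (ha : 1 ≤ a) (hai : a ≤ i) (hin : i ≤ n - 1) :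
    Ideal.Quotient.mk I (ϖ i * ∏ k ∈ Finset.Icc a (n - 1), ϖ k) =
      (((n : ℝ) - i) / ((n : ℝ) - a + 1)) •
          Ideal.Quotient.mk I (∏ k ∈ Finset.Icc (a - 1) (n - 1), ϖ k) +
        (2 * ((i : ℝ) - a + 1) / ((n : ℝ) - a + 1)) •
          Ideal.Quotient.mk I (∏ k ∈ Finset.Icc a n, ϖ k) := by
  obtain ⟨m, rfl⟩ : ∃ m, a = m + 1 := ⟨a - 1, by omega⟩
  obtain ⟨p, rfl⟩ : ∃ p, n = p + 2 := ⟨n - 2, by omega⟩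
  simp only [Nat.add_sub_cancel, Nat.reduceSubDiff] at *
  set P := ∏ k ∈ Icc (m + 1) (p + 1), ϖ k
  set x : ℕ → MvPolynomial ℕ ℝ ⧸ I := fun k => Ideal.Quotient.mk I (ϖ k * P) with hx
  have hkill : ∀ k, m + 1 ≤ k → k ≤ p + 1 → Ideal.Quotient.mk I (α k * P) = 0 := fun k h1 h2 =>
    Ideal.Quotient.mk_mul_prod_eq_zero (mem_Icc.2 ⟨h1, h2⟩)
      (hI ▸ Ideal.subset_span ⟨k, by omega, by omega, rfl⟩)
  have hrec : ∀ k, m < k → k ≤ p → x (k + 1) - x k = x k - x (k - 1) := by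
    intro k h1 h2
    have h := hkill k h1 (by omega)
    rw [hα1 k (by omega) h2] at h
    simp only [hx, add_mul, sub_mul, neg_mul, mul_assoc, map_add, map_sub, map_neg, map_mul,
      map_ofNat] at h ⊢
    linear_combination -h
  have hlast : x (p + 2) + x (p + 2) = x (p + 1) + x (p + 1) - x p := by
    have h := hkill (p + 1) (by omega) le_rfl
    rw [hα2] at h
    simp only [hx, add_mul, sub_mul, neg_mul, mul_assoc, map_add, map_sub, map_neg, map_mul,
      map_ofNat] at h ⊢
    linear_combination -h
  have hbot : ∏ k ∈ Icc m (p + 1), ϖ k = ϖ m * P := by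
    rw [← mul_prod_Ioc_eq_prod_Icc (by omega), ← Icc_add_one_left_eq_Ioc]
  have htop : ∏ k ∈ Icc (m + 1) (p + 2), ϖ k = ϖ (p + 2) * P := by
    rw [prod_Icc_succ_top (by omega), mul_comm]
  rw [hbot, htop]
  change x i = _ • x m + _ • x (p + 2)
  convert eq_div_smul_add_div_smul_of_sub_eq_sub_pred (K := ℝ) hrec hlast hai hin using 3 <;>
    push_cast <;> ring

theorem stmt_3 (n : ℕ) (hn : 2 ≤ n)
    (ϖ : ℕ → MvPolynomial ℕ ℝ)
    (hϖ : ∀ k, ϖ k = if 1 ≤ k ∧ k ≤ n then X k else 0)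
    (α : ℕ → MvPolynomial ℕ ℝ)
    (hα1 : ∀ k, 1 ≤ k → k ≤ n - 2 → α k = -ϖ (k - 1) + 2 * ϖ k - ϖ (k + 1))
    (hα2 : α (n - 1) = -ϖ (n - 2) + 2 * ϖ (n - 1) - 2 * ϖ n)
    (hα3 : α n = -ϖ (n - 1) + 2 * ϖ n)
    (I : Ideal (MvPolynomial ℕ ℝ))
    (hI : I = Ideal.span {p | ∃ k, 1 ≤ k ∧ k ≤ n ∧ p = α k * ϖ k})
    (a i : ℕ) (ha : 1 ≤ a) (hai : a ≤ i) (hin : i ≤ n - 1) :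
    Ideal.Quotient.mk I (ϖ i * ∏ k ∈ Finset.Icc a (n - 1), ϖ k) =
      (((n : ℝ) - i) / ((n : ℝ) - a + 1)) •
          Ideal.Quotient.mk I (∏ k ∈ Finset.Icc (a - 1) (n - 1), ϖ k) +
        (2 * ((i : ℝ) - a + 1) / ((n : ℝ) - a + 1)) •
          Ideal.Quotient.mk I (∏ k ∈ Finset.Icc a n, ϖ k) :=
  stmt_3_general n ϖ α hα1 hα2 I hI a i ha hai hin
end

section
/- Let R = ℝ[ϖ_1,…,ϖ_n]/(α_i ϖ_i : 1 ≤ i ≤ n) with the type B_n relations α_i = -ϖ_{i-1} + 2ϖ_i - ϖ_{i+1} (i ≤ n-2), α_{n-1} = -ϖ_{n-2} + 2ϖ_{n-1} - 2ϖ_n, α_n = -ϖ_{n-1} + 2ϖ_n, and ϖ_0 = 0. Then for 1 ≤ a ≤ i ≤ n: ϖ_i · (ϖ_a ϖ_{a+1} ⋯ ϖ_n) = b_i · ϖ_{a-1} ϖ_a ⋯ ϖ_n, where b_i = 1 if a ≤ i ≤ n-1 and b_i = 1/2 if i = n. -/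
open MvPolynomial Finset

theorem stmt_4 (n : ℕ) (hn : 2 ≤ n)
    (ϖ : ℕ → MvPolynomial ℕ ℝ)
    (hϖ : ∀ k, ϖ k = if 1 ≤ k ∧ k ≤ n then X k else 0)
    (α : ℕ → MvPolynomial ℕ ℝ)
    (hα1 : ∀ k, 1 ≤ k → k ≤ n - 2 → α k = -ϖ (k - 1) + 2 * ϖ k - ϖ (k + 1))
    (hα2 : α (n - 1) = -ϖ (n - 2) + 2 * ϖ (n - 1) - 2 * ϖ n)
    (hα3 : α n = -ϖ (n - 1) + 2 * ϖ n)
    (I : Ideal (MvPolynomial ℕ ℝ))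
    (hI : I = Ideal.span {p | ∃ k, 1 ≤ k ∧ k ≤ n ∧ p = α k * ϖ k})
    (a i : ℕ) (ha : 1 ≤ a) (hai : a ≤ i) (hin : i ≤ n) :
    Ideal.Quotient.mk I (ϖ i * ∏ k ∈ Finset.Icc a n, ϖ k) =
      (if i = n then (1 / 2 : ℝ) else 1) •
        Ideal.Quotient.mk I (∏ k ∈ Finset.Icc (a - 1) n, ϖ k) := by
  subst hI
  obtain ⟨m, rfl⟩ : ∃ m, n = m + 2 := ⟨n - 2, by omega⟩
  obtain ⟨b, rfl⟩ : ∃ b, a = b + 1 := ⟨a - 1, by omega⟩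
  rw [show m + 2 - 1 = m + 1 from rfl, show m + 2 - 2 = m from rfl] at hα2
  rw [show m + 2 - 1 = m + 1 from rfl] at hα3
  rw [show b + 1 - 1 = b from rfl]
  set J := Ideal.span {p | ∃ k, 1 ≤ k ∧ k ≤ m + 2 ∧ p = α k * ϖ k} with hJ
  set P := ∏ k ∈ Finset.Icc (b + 1) (m + 2), ϖ k with hP
  have hbn : b + 1 ≤ m + 2 := le_trans hai hin
  have rel : ∀ k, 1 ≤ k → k ≤ m + 2 → b + 1 ≤ k → α k * P ∈ J := by
    intro k h1 h2 h3
    have hk : k ∈ Finset.Icc (b + 1) (m + 2) := Finset.mem_Icc.mpr ⟨h3, h2⟩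
    have e : α k * P = (α k * ϖ k) * ∏ j ∈ (Finset.Icc (b + 1) (m + 2)).erase k, ϖ j := by
      rw [mul_assoc, Finset.mul_prod_erase _ _ hk]
    rw [e]
    exact Ideal.mul_mem_right _ _ (Ideal.subset_span ⟨k, h1, h2, rfl⟩)
  have key3 : (2 * ϖ (m + 2) - ϖ (m + 1)) * P ∈ J := by
    have h := rel (m + 2) (by omega) le_rfl hbn
    rw [hα3] at h
    have e : (2 * ϖ (m + 2) - ϖ (m + 1)) * P = (-ϖ (m + 1) + 2 * ϖ (m + 2)) * P := by ring
    rwa [e]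
  have D : ∀ d j, j + d = m → b ≤ j → (ϖ (j + 1) - ϖ j) * P ∈ J := by
    intro d
    induction d with
    | zero =>
      intro j hj hbj
      obtain rfl : j = m := by omega
      have h2 := rel (j + 1) (by omega) (by omega) (by omega)
      rw [hα2] at h2
      have e : (ϖ (j + 1) - ϖ j) * P =
          (-ϖ j + 2 * ϖ (j + 1) - 2 * ϖ (j + 2)) * P + (2 * ϖ (j + 2) - ϖ (j + 1)) * P := by
        ring
      rw [e]
      exact Ideal.add_mem _ h2 key3
    | succ d ih =>
      intro j hj hbj
      have ih' := ih (j + 1) (by omega) (by omega)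
      have h1 := rel (j + 1) (by omega) (by omega) (by omega)
      rw [hα1 (j + 1) (by omega) (by omega), show j + 1 - 1 = j from rfl] at h1
      have e : (ϖ (j + 1) - ϖ j) * P =
          (-ϖ j + 2 * ϖ (j + 1) - ϖ (j + 2)) * P + (ϖ (j + 2) - ϖ (j + 1)) * P := by ring
      rw [e]
      exact Ideal.add_mem _ h1 ih'
  have E : ∀ i', b ≤ i' → i' ≤ m + 1 → (ϖ i' - ϖ b) * P ∈ J := by
    intro i' hbi
    induction i', hbi using Nat.le_induction with
    | base => intro _; simp only [sub_self, zero_mul]; exact Ideal.zero_mem J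
    | succ i' hbi ih =>
      intro h
      have e : (ϖ (i' + 1) - ϖ b) * P = (ϖ (i' + 1) - ϖ i') * P + (ϖ i' - ϖ b) * P := by ring
      rw [e]
      exact Ideal.add_mem _ (D (m - i') i' (by omega) hbi) (ih (by omega))
  have hset : (Finset.Icc b (m + 2)).erase b = Finset.Icc (b + 1) (m + 2) := by
    ext x
    simp only [Finset.mem_erase, Finset.mem_Icc]
    omega
  have hPb : ∏ k ∈ Finset.Icc b (m + 2), ϖ k = ϖ b * P := by
    rw [hP, ← hset, Finset.mul_prod_erase _ _ (Finset.mem_Icc.mpr ⟨le_refl b, by omega⟩)]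
  rw [hPb]
  by_cases hi : i = m + 2
  · subst hi
    simp only [if_pos rfl]
    have h2 : Ideal.Quotient.mk J (2 * (ϖ (m + 2) * P)) = Ideal.Quotient.mk J (ϖ (m + 1) * P) := by
      rw [Ideal.Quotient.eq]
      have e : 2 * (ϖ (m + 2) * P) - ϖ (m + 1) * P = (2 * ϖ (m + 2) - ϖ (m + 1)) * P := by ring
      rw [e]; exact key3
    have h3 : Ideal.Quotient.mk J (ϖ (m + 1) * P) = Ideal.Quotient.mk J (ϖ b * P) := by
      rw [Ideal.Quotient.eq]
      have e : ϖ (m + 1) * P - ϖ b * P = (ϖ (m + 1) - ϖ b) * P := by ring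
      rw [e]; exact E (m + 1) (by omega) le_rfl
    have h4 : Ideal.Quotient.mk J (2 * (ϖ (m + 2) * P)) =
        (2 : ℝ) • Ideal.Quotient.mk J (ϖ (m + 2) * P) := by
      rw [two_smul, show 2 * (ϖ (m + 2) * P) = ϖ (m + 2) * P + ϖ (m + 2) * P from by ring,
        map_add]
    calc Ideal.Quotient.mk J (ϖ (m + 2) * P)
        = (1 / 2 : ℝ) • ((2 : ℝ) • Ideal.Quotient.mk J (ϖ (m + 2) * P)) := by
          rw [smul_smul]; norm_num
      _ = (1 / 2 : ℝ) • Ideal.Quotient.mk J (ϖ b * P) := by rw [← h4, h2, h3]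
  · simp only [if_neg hi, one_smul]
    rw [Ideal.Quotient.eq]
    have e : ϖ i * P - ϖ b * P = (ϖ i - ϖ b) * P := by ring
    rw [e]
    exact E i (by omega) (by omega)
end

section
/- Let R = ℝ[ϖ_1,…,ϖ_n]/(α_i ϖ_i : 1 ≤ i ≤ n) with type C_n relations: α_i = -ϖ_{i-1} + 2ϖ_i - ϖ_{i+1} for 1 ≤ i ≤ n-1, α_n = -2ϖ_{n-1} + 2ϖ_n, and ϖ_0 = 0. Then for all 1 ≤ a ≤ i ≤ n-1: ϖ_i · (ϖ_a ϖ_{a+1} ⋯ ϖ_{n-1}) = ((n-i)/(n-a+1)) · ϖ_{a-1} ϖ_a ⋯ ϖ_{n-1} + ((i-a+1)/(n-a+1)) · ϖ_a ϖ_{a+1} ⋯ ϖ_n. -/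
open MvPolynomial Finset

set_option maxHeartbeats 1000000

theorem stmt_5 (n : ℕ) (hn : 2 ≤ n)
    (ϖ : ℕ → MvPolynomial ℕ ℝ)
    (hϖ : ∀ k, ϖ k = if 1 ≤ k ∧ k ≤ n then X k else 0)
    (α : ℕ → MvPolynomial ℕ ℝ)
    (hα1 : ∀ k, 1 ≤ k → k ≤ n - 1 → α k = -ϖ (k - 1) + 2 * ϖ k - ϖ (k + 1))
    (hα2 : α n = -2 * ϖ (n - 1) + 2 * ϖ n)
    (I : Ideal (MvPolynomial ℕ ℝ))
    (hI : I = Ideal.span {p | ∃ k, 1 ≤ k ∧ k ≤ n ∧ p = α k * ϖ k})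
    (a i : ℕ) (ha : 1 ≤ a) (hai : a ≤ i) (hin : i ≤ n - 1) :
    Ideal.Quotient.mk I (ϖ i * ∏ k ∈ Finset.Icc a (n - 1), ϖ k) =
      (((n : ℝ) - i) / ((n : ℝ) - a + 1)) •
          Ideal.Quotient.mk I (∏ k ∈ Finset.Icc (a - 1) (n - 1), ϖ k) +
        (((i : ℝ) - a + 1) / ((n : ℝ) - a + 1)) •
          Ideal.Quotient.mk I (∏ k ∈ Finset.Icc a n, ϖ k) := by
  set P : MvPolynomial ℕ ℝ := ∏ k ∈ Finset.Icc a (n - 1), ϖ k with hP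
  set g : ℕ → MvPolynomial ℕ ℝ ⧸ I := fun k => Ideal.Quotient.mk I (ϖ k * P) with hg
  -- the discrete harmonic recurrence, from the relations α_k ϖ_k = 0
  have key : ∀ k, a ≤ k → k ≤ n - 1 → g (k + 1) + g (k - 1) = g k + g k := by
    intro k hak hk
    have hkmem : k ∈ Finset.Icc a (n - 1) := Finset.mem_Icc.mpr ⟨hak, hk⟩
    have hPfac : P = ϖ k * ∏ j ∈ (Finset.Icc a (n - 1)).erase k, ϖ j :=
      (Finset.mul_prod_erase _ _ hkmem).symm
    have hmem : α k * ϖ k * ∏ j ∈ (Finset.Icc a (n - 1)).erase k, ϖ j ∈ I := by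
      refine I.mul_mem_right _ ?_
      rw [hI]
      exact Ideal.subset_span ⟨k, ha.trans hak, by omega, rfl⟩
    have h0 : Ideal.Quotient.mk I (α k * ϖ k * ∏ j ∈ (Finset.Icc a (n - 1)).erase k, ϖ j) = 0 :=
      (Ideal.Quotient.eq_zero_iff_mem).mpr hmem
    have heq : ϖ (k + 1) * P + ϖ (k - 1) * P - (ϖ k * P + ϖ k * P)
        = -(α k * ϖ k * ∏ j ∈ (Finset.Icc a (n - 1)).erase k, ϖ j) := by
      rw [hα1 k (ha.trans hak) hk, hPfac]; ring
    have h1 : g (k + 1) + g (k - 1) - (g k + g k) = 0 := by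
      simp only [hg]
      rw [← map_add, ← map_add, ← map_sub, heq, map_neg, h0, neg_zero]
    exact sub_eq_zero.mp h1
  set d : MvPolynomial ℕ ℝ ⧸ I := g a - g (a - 1) with hdd
  -- consecutive differences are constant
  have hd : ∀ k, a ≤ k → k ≤ n → g k - g (k - 1) = d := by
    intro k hak
    induction k, hak using Nat.le_induction with
    | base => intro _; exact hdd.symm
    | succ k hk ih =>
      intro hkn
      have hkey := key k hk (by omega)
      have ihv := ih (by omega)
      have hstep : g (k + 1) - g k = g k - g (k - 1) := by linear_combination hkey
      simpa [Nat.add_sub_cancel] using hstep.trans ihv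
  -- g is linear on [a-1, n]
  have hlin : ∀ k, a - 1 ≤ k → k ≤ n → g k = g (a - 1) + ((k - (a - 1) : ℕ) : ℝ) • d := by
    intro k hak
    induction k, hak using Nat.le_induction with
    | base => intro _; simp
    | succ k hk ih =>
      intro hkn
      have ihv := ih (by omega)
      have hstep := hd (k + 1) (by omega) hkn
      simp only [Nat.add_sub_cancel] at hstep
      have hcast : ((k + 1 - (a - 1) : ℕ) : ℝ) = ((k - (a - 1) : ℕ) : ℝ) + 1 := by
        rw [Nat.succ_sub hk]; push_cast; ring
      have hgk : g (k + 1) = g k + d := by linear_combination hstep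
      rw [hgk, ihv, hcast, add_smul, one_smul]
      abel
  have hga : Ideal.Quotient.mk I (∏ k ∈ Finset.Icc (a - 1) (n - 1), ϖ k) = g (a - 1) := by
    have hset : Finset.Icc (a - 1) (n - 1) = insert (a - 1) (Finset.Icc a (n - 1)) := by
      ext x; simp only [Finset.mem_Icc, Finset.mem_insert]; omega
    rw [hset, Finset.prod_insert (by simp only [Finset.mem_Icc]; omega)]
  have hgn : Ideal.Quotient.mk I (∏ k ∈ Finset.Icc a n, ϖ k) = g n := by
    have hset : Finset.Icc a n = insert n (Finset.Icc a (n - 1)) := by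
      ext x; simp only [Finset.mem_Icc, Finset.mem_insert]; omega
    rw [hset, Finset.prod_insert (by simp only [Finset.mem_Icc]; omega)]
  have hgoal : Ideal.Quotient.mk I (ϖ i * P) = g i := rfl
  rw [hgoal, hga, hgn, hlin i (by omega) (by omega), hlin n (by omega) le_rfl]
  have hci : ((i - (a - 1) : ℕ) : ℝ) = (i : ℝ) - a + 1 := by
    rw [Nat.cast_sub (by omega), Nat.cast_sub ha]; push_cast; ring
  have hcn : ((n - (a - 1) : ℕ) : ℝ) = (n : ℝ) - a + 1 := by
    rw [Nat.cast_sub (by omega), Nat.cast_sub ha]; push_cast; ring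
  rw [hci, hcn]
  have hs : (n : ℝ) - a + 1 ≠ 0 := by
    have h1 : (a : ℝ) ≤ n := by exact_mod_cast (by omega : a ≤ n)
    intro h; linarith
  have e1 : ((n : ℝ) - i) / ((n : ℝ) - a + 1) + ((i : ℝ) - a + 1) / ((n : ℝ) - a + 1) = 1 := by
    rw [← add_div, div_eq_one_iff_eq hs]; ring
  have e2 : ((i : ℝ) - a + 1) / ((n : ℝ) - a + 1) * ((n : ℝ) - a + 1) = (i : ℝ) - a + 1 :=
    div_mul_cancel₀ _ hs
  rw [smul_add, smul_smul, ← add_assoc, ← add_smul, e1, one_smul, e2]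
end

section
/- Let n ≥ 4 and let R = ℝ[ϖ_1,…,ϖ_n]/(α_i ϖ_i : 1 ≤ i ≤ n) with type D_n relations: α_i = -ϖ_{i-1} + 2ϖ_i - ϖ_{i+1} for 1 ≤ i ≤ n-3, α_{n-2} = -ϖ_{n-3} + 2ϖ_{n-2} - ϖ_{n-1} - ϖ_n, α_{n-1} = -ϖ_{n-2} + 2ϖ_{n-1}, α_n = -ϖ_{n-2} + 2ϖ_n, and ϖ_0 = 0. Then for all 1 ≤ a ≤ i ≤ n-1 with a ≤ n-2: ϖ_i · (ϖ_a ϖ_{a+1} ⋯ ϖ_{n-1}) = ((n-i)/(n-a+1)) · ϖ_{a-1} ϖ_a ⋯ ϖ_{n-1} + d_i · ϖ_a ϖ_{a+1} ⋯ ϖ_n, where d_i = 2(i-a+1)/(n-a+1) if a ≤ i ≤ n-2 and d_i = (n-a-1)/(n-a+1) if i = n-1. -/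
set_option maxHeartbeats 1000000

open MvPolynomial Finset

theorem stmt_7 (n : ℕ) (hn : 4 ≤ n)
    (ϖ : ℕ → MvPolynomial ℕ ℝ)
    (hϖ : ∀ k, ϖ k = if 1 ≤ k ∧ k ≤ n then X k else 0)
    (α : ℕ → MvPolynomial ℕ ℝ)
    (hα1 : ∀ k, 1 ≤ k → k ≤ n - 3 → α k = -ϖ (k - 1) + 2 * ϖ k - ϖ (k + 1))
    (hα2 : α (n - 2) = -ϖ (n - 3) + 2 * ϖ (n - 2) - ϖ (n - 1) - ϖ n)
    (hα3 : α (n - 1) = -ϖ (n - 2) + 2 * ϖ (n - 1))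
    (hα4 : α n = -ϖ (n - 2) + 2 * ϖ n)
    (I : Ideal (MvPolynomial ℕ ℝ))
    (hI : I = Ideal.span {p | ∃ k, 1 ≤ k ∧ k ≤ n ∧ p = α k * ϖ k})
    (a i : ℕ) (ha : 1 ≤ a) (hai : a ≤ i) (hin : i ≤ n - 1) (han : a ≤ n - 2) :
    Ideal.Quotient.mk I (ϖ i * ∏ k ∈ Finset.Icc a (n - 1), ϖ k) =
      (((n : ℝ) - i) / ((n : ℝ) - a + 1)) •
          Ideal.Quotient.mk I (∏ k ∈ Finset.Icc (a - 1) (n - 1), ϖ k) +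
        (if i = n - 1 then ((n : ℝ) - a - 1) / ((n : ℝ) - a + 1)
          else 2 * ((i : ℝ) - a + 1) / ((n : ℝ) - a + 1)) •
          Ideal.Quotient.mk I (∏ k ∈ Finset.Icc a n, ϖ k) := by
  obtain ⟨P, hP⟩ : ∃ p, p = ∏ k ∈ Finset.Icc a (n - 1), ϖ k := ⟨_, rfl⟩
  rw [← hP]
  set mk := Ideal.Quotient.mk I with hmk
  -- generators vanish
  have genzero : ∀ j, 1 ≤ j → a ≤ j → j ≤ n - 1 → mk (α j * P) = 0 := by
    intro j hj1 hja hjn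
    have hmem : α j * ϖ j ∈ I := by
      rw [hI]; exact Ideal.subset_span ⟨j, hj1, le_trans hjn (Nat.sub_le n 1), rfl⟩
    have hjmem : j ∈ Finset.Icc a (n - 1) := Finset.mem_Icc.mpr ⟨hja, hjn⟩
    have hsplit : α j * P = (α j * ϖ j) * ∏ k ∈ (Finset.Icc a (n - 1)).erase j, ϖ k := by
      rw [hP, ← Finset.mul_prod_erase _ _ hjmem]; ring
    rw [hsplit, Ideal.Quotient.eq_zero_iff_mem]
    exact I.mul_mem_right _ hmem
  -- three relations
  have rel1 : ∀ j, a ≤ j → j ≤ n - 3 →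
      mk (ϖ (j + 1) * P) = (2 : ℝ) • mk (ϖ j * P) - mk (ϖ (j - 1) * P) := by
    intro j hja hjn
    have h0 := genzero j (le_trans ha hja) hja (by omega)
    rw [hα1 j (le_trans ha hja) hjn] at h0
    rw [two_smul]
    rw [show (-ϖ (j - 1) + 2 * ϖ j - ϖ (j + 1)) * P
        = (ϖ j * P + ϖ j * P) - ϖ (j - 1) * P - ϖ (j + 1) * P by ring] at h0
    simp only [map_sub, map_add] at h0
    linear_combination -h0
  have rel2 : mk (ϖ (n - 1) * P) = (2 : ℝ) • mk (ϖ (n - 2) * P)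
      - mk (ϖ (n - 3) * P) - mk (ϖ n * P) := by
    have h0 := genzero (n - 2) (by omega) han (by omega)
    rw [hα2] at h0
    rw [two_smul]
    rw [show (-ϖ (n - 3) + 2 * ϖ (n - 2) - ϖ (n - 1) - ϖ n) * P
        = (ϖ (n - 2) * P + ϖ (n - 2) * P) - ϖ (n - 3) * P - ϖ (n - 1) * P - ϖ n * P by
      ring] at h0
    simp only [map_sub, map_add] at h0
    linear_combination -h0
  have rel3 : mk (ϖ (n - 2) * P) = (2 : ℝ) • mk (ϖ (n - 1) * P) := by
    have h0 := genzero (n - 1) (by omega) (by omega) (by omega)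
    rw [hα3] at h0
    rw [two_smul]
    rw [show (-ϖ (n - 2) + 2 * ϖ (n - 1)) * P
        = (ϖ (n - 1) * P + ϖ (n - 1) * P) - ϖ (n - 2) * P by ring] at h0
    simp only [map_sub, map_add] at h0
    linear_combination -h0
  -- the arithmetic-progression structure
  have key : ∀ t, a - 1 + t ≤ n - 2 → mk (ϖ (a - 1 + t) * P)
      = mk (ϖ (a - 1) * P) + (t : ℝ) • (mk (ϖ a * P) - mk (ϖ (a - 1) * P)) := by
    have main : ∀ t, (a - 1 + t ≤ n - 2 → mk (ϖ (a - 1 + t) * P)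
          = mk (ϖ (a - 1) * P) + (t : ℝ) • (mk (ϖ a * P) - mk (ϖ (a - 1) * P)))
        ∧ (a - 1 + (t + 1) ≤ n - 2 → mk (ϖ (a - 1 + (t + 1)) * P)
          = mk (ϖ (a - 1) * P) + ((t + 1 : ℕ) : ℝ) • (mk (ϖ a * P) - mk (ϖ (a - 1) * P))) := by
      intro t
      induction t with
      | zero =>
        constructor
        · intro _; norm_num
        · intro _
          rw [show a - 1 + (0 + 1) = a from by omega]
          push_cast
          module
      | succ t ih =>
        refine ⟨ih.2, fun hle => ?_⟩
        have h1 := ih.2 (by omega)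
        have h0 := ih.1 (by omega)
        have hr := rel1 (a + t) (by omega) (by omega)
        rw [show a + t + 1 = a - 1 + (t + 1 + 1) from by omega,
            show a + t - 1 = a - 1 + t from by omega,
            show a + t = a - 1 + (t + 1) from by omega] at hr
        rw [hr, h1, h0]
        push_cast
        module
    exact fun t => (main t).1
  -- V_{n-2} and V_{n-3}
  have cc2 : ((n - 1 - a : ℕ) : ℝ) = (n : ℝ) - 1 - (a : ℝ) := by
    rw [show n - 1 - a = n - (a + 1) from by omega, Nat.cast_sub (by omega)]
    push_cast; ring
  have cc3 : ((n - 2 - a : ℕ) : ℝ) = (n : ℝ) - (a : ℝ) - 2 := by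
    rw [show n - 2 - a = n - (a + 2) from by omega, Nat.cast_sub (by omega)]
    push_cast; ring
  have hVn2 : mk (ϖ (n - 2) * P)
      = mk (ϖ (a - 1) * P) + ((n : ℝ) - 1 - a) • (mk (ϖ a * P) - mk (ϖ (a - 1) * P)) := by
    have h := key (n - 1 - a) (by omega)
    rw [show a - 1 + (n - 1 - a) = n - 2 from by omega, cc2] at h
    exact h
  have hVn3 : mk (ϖ (n - 3) * P)
      = mk (ϖ (a - 1) * P) + ((n : ℝ) - a - 2) • (mk (ϖ a * P) - mk (ϖ (a - 1) * P)) := by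
    have h := key (n - 2 - a) (by omega)
    rw [show a - 1 + (n - 2 - a) = n - 3 from by omega, cc3] at h
    exact h
  -- solve for W and V_{n-1}
  have hW2 : (2 : ℝ) • mk (ϖ n * P)
      = mk (ϖ (a - 1) * P) + ((n : ℝ) - a + 1) • (mk (ϖ a * P) - mk (ϖ (a - 1) * P)) := by
    linear_combination (norm := module) (2 : ℝ) • rel2 + rel3 + (3 : ℝ) • hVn2 - (2 : ℝ) • hVn3
  have hW : mk (ϖ n * P)
      = ((1 : ℝ) / 2) • mk (ϖ (a - 1) * P)
        + (((n : ℝ) - a + 1) / 2) • (mk (ϖ a * P) - mk (ϖ (a - 1) * P)) := by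
    have h : mk (ϖ n * P) = ((1 : ℝ) / 2) • ((2 : ℝ) • mk (ϖ n * P)) := by module
    rw [h, hW2]; module
  have hVn1 : mk (ϖ (n - 1) * P)
      = ((1 : ℝ) / 2) • mk (ϖ (a - 1) * P)
        + (((n : ℝ) - 1 - a) / 2) • (mk (ϖ a * P) - mk (ϖ (a - 1) * P)) := by
    have h : mk (ϖ (n - 1) * P) = ((1 : ℝ) / 2) • ((2 : ℝ) • mk (ϖ (n - 1) * P)) := by module
    rw [h, ← rel3, hVn2]; module
  -- rewrite the two boundary products
  have hprod1 : ∏ k ∈ Finset.Icc (a - 1) (n - 1), ϖ k = ϖ (a - 1) * P := by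
    rw [hP, show Finset.Icc (a - 1) (n - 1) = insert (a - 1) (Finset.Icc a (n - 1)) from by
        ext x; simp only [Finset.mem_Icc, Finset.mem_insert]; omega,
      Finset.prod_insert (by simp only [Finset.mem_Icc]; omega)]
  have hprod2 : ∏ k ∈ Finset.Icc a n, ϖ k = ϖ n * P := by
    rw [hP, show Finset.Icc a n = insert n (Finset.Icc a (n - 1)) from by
        ext x; simp only [Finset.mem_Icc, Finset.mem_insert]; omega,
      Finset.prod_insert (by simp only [Finset.mem_Icc]; omega)]
  rw [hprod1, hprod2]
  have hden : (n : ℝ) - a + 1 ≠ 0 := by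
    have : (a : ℝ) ≤ (n : ℝ) := by exact_mod_cast (by omega : a ≤ n)
    nlinarith
  by_cases hi : i = n - 1
  · subst hi
    have cc1 : ((n - 1 : ℕ) : ℝ) = (n : ℝ) - 1 := by
      rw [Nat.cast_sub (by omega)]; norm_num
    rw [if_pos rfl, hVn1, hW, cc1]
    match_scalars <;> field_simp <;> ring
  · rw [if_neg hi]
    have hVi := key (i - (a - 1)) (by omega)
    rw [show a - 1 + (i - (a - 1)) = i from by omega,
        show ((i - (a - 1) : ℕ) : ℝ) = (i : ℝ) - a + 1 from by
          rw [show i - (a - 1) = i + 1 - a from by omega, Nat.cast_sub (by omega)]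
          push_cast; ring] at hVi
    rw [hVi, hW]
    match_scalars <;> field_simp <;> ring
end

section
/- Let n ≥ 4 and let R = ℝ[ϖ_1,…,ϖ_n]/(α_i ϖ_i : 1 ≤ i ≤ n) with the type D_n relations α_i = -ϖ_{i-1} + 2ϖ_i - ϖ_{i+1} for 1 ≤ i ≤ n-3, α_{n-2} = -ϖ_{n-3} + 2ϖ_{n-2} - ϖ_{n-1} - ϖ_n, α_{n-1} = -ϖ_{n-2} + 2ϖ_{n-1}, α_n = -ϖ_{n-2} + 2ϖ_n, and ϖ_0 = 0. Then for 1 ≤ a ≤ i ≤ n with a ≤ n-2: ϖ_i · (ϖ_a ϖ_{a+1} ⋯ ϖ_n) = d_i · ϖ_{a-1} ϖ_a ⋯ ϖ_n, where d_i = 1 if a ≤ i ≤ n-2 and d_i = 1/2 if i = n-1 or i = n. -/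
open MvPolynomial Finset
set_option maxHeartbeats 1000000

theorem stmt_8 (n : ℕ) (hn : 4 ≤ n)
    (ϖ : ℕ → MvPolynomial ℕ ℝ)
    (hϖ : ∀ k, ϖ k = if 1 ≤ k ∧ k ≤ n then X k else 0)
    (α : ℕ → MvPolynomial ℕ ℝ)
    (hα1 : ∀ k, 1 ≤ k → k ≤ n - 3 → α k = -ϖ (k - 1) + 2 * ϖ k - ϖ (k + 1))
    (hα2 : α (n - 2) = -ϖ (n - 3) + 2 * ϖ (n - 2) - ϖ (n - 1) - ϖ n)
    (hα3 : α (n - 1) = -ϖ (n - 2) + 2 * ϖ (n - 1))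
    (hα4 : α n = -ϖ (n - 2) + 2 * ϖ n)
    (I : Ideal (MvPolynomial ℕ ℝ))
    (hI : I = Ideal.span {p | ∃ k, 1 ≤ k ∧ k ≤ n ∧ p = α k * ϖ k})
    (a i : ℕ) (ha : 1 ≤ a) (hai : a ≤ i) (hin : i ≤ n) (han : a ≤ n - 2) :
    Ideal.Quotient.mk I (ϖ i * ∏ k ∈ Finset.Icc a n, ϖ k) =
      (if i = n - 1 ∨ i = n then (1 / 2 : ℝ) else 1) •
        Ideal.Quotient.mk I (∏ k ∈ Finset.Icc (a - 1) n, ϖ k) := by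
  set π := Ideal.Quotient.mk I with hπdef
  set w : ℕ → MvPolynomial ℕ ℝ ⧸ I := fun j => π (ϖ j) with hwdef
  set P := π (∏ k ∈ Finset.Icc a n, ϖ k) with hPdef
  -- the RHS product
  have hc : π (∏ k ∈ Finset.Icc (a - 1) n, ϖ k) = w (a - 1) * P := by
    have hins : Finset.Icc (a - 1) n = insert (a - 1) (Finset.Icc a n) := by
      ext j; simp only [Finset.mem_insert, Finset.mem_Icc]; omega
    rw [hins, Finset.prod_insert (by simp only [Finset.mem_Icc]; omega), map_mul]
  -- vanishing of relations times the product
  have hz : ∀ k, a ≤ k → k ≤ n → π (α k) * P = 0 := by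
    intro k h1 h2
    have hkmem : k ∈ Finset.Icc a n := by simp only [Finset.mem_Icc]; omega
    have hmem : α k * ϖ k ∈ I := by
      rw [hI]; exact Ideal.subset_span ⟨k, le_trans ha h1, h2, rfl⟩
    have h0 : π (α k * ϖ k * ∏ j ∈ (Finset.Icc a n).erase k, ϖ j) = 0 :=
      Ideal.Quotient.eq_zero_iff_mem.mpr (I.mul_mem_right _ hmem)
    rw [mul_assoc, Finset.mul_prod_erase _ ϖ hkmem] at h0
    rw [hPdef, ← map_mul]
    exact h0
  have E1 : ∀ k, a ≤ k → k ≤ n - 3 →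
      w (k - 1) * P + w (k + 1) * P = 2 * (w k * P) := by
    intro k h1 h2
    have h := hz k h1 (by omega)
    rw [hα1 k (le_trans ha h1) h2] at h
    simp only [map_add, map_sub, map_mul, map_neg, map_ofNat, hwdef] at h ⊢
    linear_combination -h
  have E2 : w (n - 3) * P + w (n - 1) * P + w n * P = 2 * (w (n - 2) * P) := by
    have h := hz (n - 2) han (by omega)
    rw [hα2] at h
    simp only [map_add, map_sub, map_mul, map_neg, map_ofNat, hwdef] at h ⊢
    linear_combination -h
  have E3 : w (n - 2) * P = 2 * (w (n - 1) * P) := by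
    have h := hz (n - 1) (by omega) (by omega)
    rw [hα3] at h
    simp only [map_add, map_sub, map_mul, map_neg, map_ofNat, hwdef] at h ⊢
    linear_combination -h
  have E4 : w (n - 2) * P = 2 * (w n * P) := by
    have h := hz n (by omega) le_rfl
    rw [hα4] at h
    simp only [map_add, map_sub, map_mul, map_neg, map_ofNat, hwdef] at h ⊢
    linear_combination -h
  -- 2 is invertible in the quotient
  set u : MvPolynomial ℕ ℝ ⧸ I := π (C (1 / 2 : ℝ)) with hudef
  have hu : u * 2 = 1 := by
    rw [hudef, show ((2 : MvPolynomial ℕ ℝ ⧸ I)) = π 2 from (map_ofNat π 2).symm,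
      ← map_mul, show ((2 : MvPolynomial ℕ ℝ)) = C 2 from (map_ofNat C 2).symm,
      ← C_mul]
    norm_num
  have hcancel : ∀ x y : MvPolynomial ℕ ℝ ⧸ I, 2 * x = 2 * y → x = y := by
    intro x y h
    have h2 : (u * 2) * x = (u * 2) * y := by rw [mul_assoc, mul_assoc, h]
    rwa [hu, one_mul, one_mul] at h2
  have key0 : w (n - 3) * P = w (n - 2) * P := by
    apply hcancel
    linear_combination 2 * E2 + E3 + E4
  have step : ∀ j, a ≤ j → j ≤ n - 3 → w j * P = w (n - 2) * P →
      w (j + 1) * P = w (n - 2) * P → w (j - 1) * P = w (n - 2) * P := by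
    intro j h1 h2 hj hj1
    have e := E1 j h1 h2
    linear_combination e - hj1 + 2 * hj
  have chain : ∀ m, a - 1 + m ≤ n - 2 → w (n - 2 - m) * P = w (n - 2) * P := by
    intro m
    induction m using Nat.strong_induction_on with
    | _ m ih =>
      intro hm
      match m with
      | 0 => rfl
      | 1 => simpa [show n - 2 - 1 = n - 3 from by omega] using key0
      | (m + 2) =>
        have hj := ih (m + 1) (by omega) (by omega)
        have hj1 := ih m (by omega) (by omega)
        have hs := step (n - 2 - (m + 1)) (by omega) (by omega)
            hj (by rw [show n - 2 - (m + 1) + 1 = n - 2 - m from by omega]; exact hj1)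
        rw [show n - 2 - (m + 1) - 1 = n - 2 - (m + 2) from by omega] at hs
        exact hs
  have hA : w (a - 1) * P = w (n - 2) * P := by
    have := chain (n - 2 - (a - 1)) (by omega)
    rwa [show n - 2 - (n - 2 - (a - 1)) = a - 1 from by omega] at this
  rw [hc, map_mul]
  by_cases hcase : i = n - 1 ∨ i = n
  · rw [if_pos hcase]
    have hv : w (a - 1) * P = 2 * (w i * P) := by
      rcases hcase with h | h
      · rw [h]; exact hA.trans E3
      · rw [h]; exact hA.trans E4
    rw [hv, show (2 : MvPolynomial ℕ ℝ ⧸ I) * (w i * P) = (2 : ℝ) • (w i * P) from by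
      rw [two_smul, two_mul], smul_smul]
    norm_num
    rw [hPdef, map_prod]
  · rw [if_neg hcase, one_smul]
    have hi2 : i ≤ n - 2 := by omega
    rcases eq_or_lt_of_le hi2 with h | h
    · rw [h]; exact hA.symm.trans rfl |>.symm ▸ hA.symm
    · have := chain (n - 2 - i) (by omega)
      rw [show n - 2 - (n - 2 - i) = i from by omega] at this
      exact this.trans hA.symm
end

section
/- Let R = ℝ[ϖ_1,…,ϖ_n]/(α_i ϖ_i : 1 ≤ i ≤ n) with the type B_n relations α_i = -ϖ_{i-1} + 2ϖ_i - ϖ_{i+1} for 1 ≤ i ≤ n-2, α_{n-1} = -ϖ_{n-2} + 2ϖ_{n-1} - 2ϖ_n, α_n = -ϖ_{n-1} + 2ϖ_n, and ϖ_0 = 0. Then for every 0 ≤ k ≤ n-1, one has ϖ_1^k · ϖ_n^{n-k} = (1/(k! · 2^{n-k-1})) · ϖ_1 ϖ_2 ⋯ ϖ_n in R. Consequently, the mixed Φ-Eulerian number A^{B_n}_{k,0,…,0,n-k} = (2^{n-1}·n!)/(k!·2^{n-k-1}) = binom(n,k)·(n-k)!·2^k. -/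
open MvPolynomial Finset

set_option maxHeartbeats 1000000 in
theorem stmt_14 (n : ℕ) (hn : 2 ≤ n)
    (ϖ : ℕ → MvPolynomial ℕ ℝ)
    (hϖ : ∀ k, ϖ k = if 1 ≤ k ∧ k ≤ n then X k else 0)
    (α : ℕ → MvPolynomial ℕ ℝ)
    (hα1 : ∀ k, 1 ≤ k → k ≤ n - 2 → α k = -ϖ (k - 1) + 2 * ϖ k - ϖ (k + 1))
    (hα2 : α (n - 1) = -ϖ (n - 2) + 2 * ϖ (n - 1) - 2 * ϖ n)
    (hα3 : α n = -ϖ (n - 1) + 2 * ϖ n)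
    (I : Ideal (MvPolynomial ℕ ℝ))
    (hI : I = Ideal.span {p | ∃ k, 1 ≤ k ∧ k ≤ n ∧ p = α k * ϖ k})
    (k : ℕ) (hk : k ≤ n - 1) :
    Ideal.Quotient.mk I (ϖ 1 ^ k * ϖ n ^ (n - k)) =
      ((1 : ℝ) / ((Nat.factorial k : ℝ) * 2 ^ (n - k - 1))) •
        Ideal.Quotient.mk I (∏ j ∈ Finset.Icc 1 n, ϖ j) ∧
    ((2 : ℝ) ^ (n - 1) * (Nat.factorial n : ℝ)) /
        ((Nat.factorial k : ℝ) * 2 ^ (n - k - 1)) =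
      (n.choose k : ℝ) * (Nat.factorial (n - k) : ℝ) * 2 ^ k := by
  set π := Ideal.Quotient.mk I with hπ
  -- basic facts
  have hx0 : π (ϖ 0) = 0 := by
    rw [hϖ 0]; simp
  have hmem : ∀ i, 1 ≤ i → i ≤ n → π (α i * ϖ i) = 0 := by
    intro i h1 h2
    rw [Ideal.Quotient.eq_zero_iff_mem, hI]
    exact Ideal.subset_span ⟨i, h1, h2, rfl⟩
  have hG1 : ∀ i, 1 ≤ i → i ≤ n - 2 →
      π (ϖ (i-1)) * π (ϖ i) + π (ϖ (i+1)) * π (ϖ i) = 2 * (π (ϖ i) * π (ϖ i)) := by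
    intro i h1 h2
    have h := hmem i h1 (by omega)
    rw [hα1 i h1 h2] at h
    simp only [map_mul, map_add, map_sub, map_neg, map_ofNat] at h
    linear_combination -h
  have hG2 : π (ϖ (n-2)) * π (ϖ (n-1)) + 2 * (π (ϖ n) * π (ϖ (n-1)))
      = 2 * (π (ϖ (n-1)) * π (ϖ (n-1))) := by
    have h := hmem (n-1) (by omega) (by omega)
    rw [hα2] at h
    simp only [map_mul, map_add, map_sub, map_neg, map_ofNat] at h
    linear_combination -h
  have hG3 : π (ϖ (n-1)) * π (ϖ n) = 2 * (π (ϖ n) * π (ϖ n)) := by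
    have h := hmem n (by omega) le_rfl
    rw [hα3] at h
    simp only [map_mul, map_add, map_neg, map_ofNat] at h
    linear_combination -h
  -- singleton products
  have hsing : ∀ a b : ℕ, b = a + 1 → (∏ j ∈ Ioc a b, ϖ j) = ϖ b := by
    intro a b h; subst h; rw [Nat.Ioc_succ_singleton, Finset.prod_singleton]
  -- T side : Tp a = ∏_{j=a+1}^n ϖ j
  have hTsplit : ∀ a, a ≤ n - 1 →
      (∏ j ∈ Ioc a n, ϖ j) = (∏ j ∈ Ioc a (n-1), ϖ j) * ϖ n := by
    intro a ha
    rw [← Finset.prod_Ioc_consecutive ϖ (show a ≤ n-1 from ha) (show n-1 ≤ n by omega),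
      hsing (n-1) n (by omega)]
  have hG3T : ∀ a, a ≤ n - 1 →
      2 * (π (ϖ n) * π (∏ j ∈ Ioc a n, ϖ j)) = π (ϖ (n-1)) * π (∏ j ∈ Ioc a n, ϖ j) := by
    intro a ha
    rw [hTsplit a ha, map_mul]
    linear_combination (-(π (∏ j ∈ Ioc a (n-1), ϖ j))) * hG3
  have herase : ∀ a i, a < i → i ≤ n →
      π (∏ j ∈ Ioc a n, ϖ j) = π (ϖ i) * π (∏ j ∈ (Ioc a n).erase i, ϖ j) := by
    intro a i h1 h2
    rw [← map_mul, Finset.mul_prod_erase _ _ (by simp [Finset.mem_Ioc]; omega)]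
  have hSt : ∀ a, 1 ≤ a → ∀ d, a ≤ n - 2 - d →
      π (ϖ (n-1-d)) * π (∏ j ∈ Ioc a n, ϖ j) = π (ϖ (n-2-d)) * π (∏ j ∈ Ioc a n, ϖ j) := by
    intro a ha d
    induction d with
    | zero =>
      intro hd
      simp only [Nat.sub_zero]
      have hsp : (∏ j ∈ Ioc a n, ϖ j) = (∏ j ∈ Ioc a (n-2), ϖ j) * (ϖ (n-1) * ϖ n) := by
        rw [← Finset.prod_Ioc_consecutive ϖ (show a ≤ n-2 from hd) (show n-2 ≤ n by omega),
          ← Finset.prod_Ioc_consecutive ϖ (show n-2 ≤ n-1 by omega) (show n-1 ≤ n by omega),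
          hsing (n-2) (n-1) (by omega), hsing (n-1) n (by omega)]
      have h3 := hG3T a (by omega)
      rw [hsp] at h3 ⊢
      simp only [map_mul] at h3 ⊢
      linear_combination (-(π (∏ j ∈ Ioc a (n-2), ϖ j) * π (ϖ n))) * hG2 + h3
    | succ d ih =>
      intro hd
      have hIH := ih (by omega)
      have hi1 : 1 ≤ n - 2 - d := by omega
      have hg := hG1 (n-2-d) (by omega) (by omega)
      have hrw := herase a (n-2-d) (by omega) (by omega)
      have e1 : n - 2 - d - 1 = n - 2 - (d+1) := by omega
      have e2 : n - 2 - d + 1 = n - 1 - d := by omega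
      have e3 : n - 1 - (d+1) = n - 2 - d := by omega
      rw [e1, e2] at hg
      rw [e3]
      rw [hrw] at hIH ⊢
      linear_combination hIH - (π (∏ j ∈ (Ioc a n).erase (n-2-d), ϖ j)) * hg
  have hCh : ∀ a, 1 ≤ a → ∀ d, a ≤ n - 1 - d →
      π (ϖ (n-1)) * π (∏ j ∈ Ioc a n, ϖ j) = π (ϖ (n-1-d)) * π (∏ j ∈ Ioc a n, ϖ j) := by
    intro a ha d
    induction d with
    | zero => intro _; rfl
    | succ d ih =>
      intro hd
      have e3 : n - 1 - (d+1) = n - 2 - d := by omega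
      rw [e3]
      rw [ih (by omega)]
      have e4 : n - 1 - d = n - 1 - d := rfl
      have := hSt a ha d (by omega)
      exact this
  have hL : ∀ a, 1 ≤ a → a ≤ n - 1 →
      2 * (π (ϖ n) * π (∏ j ∈ Ioc a n, ϖ j)) = π (ϖ a) * π (∏ j ∈ Ioc a n, ϖ j) := by
    intro a h1 h2
    rw [hG3T a h2]
    have := hCh a h1 (n-1-a) (by omega)
    have e : n - 1 - (n-1-a) = a := by omega
    rw [e] at this
    exact this
  -- Lemma A' : (2:Q)^m * x n^(m+1) = π (Tp (n-1-m))
  have hA' : ∀ m, m ≤ n - 1 →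
      (2 : MvPolynomial ℕ ℝ ⧸ I)^m * π (ϖ n)^(m+1) = π (∏ j ∈ Ioc (n-1-m) n, ϖ j) := by
    intro m
    induction m with
    | zero =>
      intro _
      simp only [Nat.sub_zero, pow_zero, zero_add, pow_one, one_mul]
      rw [hsing (n-1) n (by omega)]
    | succ m ih =>
      intro hm
      have hih := ih (by omega)
      have h1 : 1 ≤ n - 1 - m := by omega
      have hLm := hL (n-1-m) h1 (by omega)
      have hstep : (∏ j ∈ Ioc (n-1-(m+1)) n, ϖ j) = ϖ (n-1-m) * (∏ j ∈ Ioc (n-1-m) n, ϖ j) := by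
        rw [← Finset.prod_Ioc_consecutive ϖ (show n-1-(m+1) ≤ n-1-m by omega) (show n-1-m ≤ n by omega)]
        rw [hsing (n-1-(m+1)) (n-1-m) (by omega)]
      rw [hstep, map_mul, ← hLm]
      rw [← hih]
      ring
  -- S side : Sp m = ∏_{j=1}^m ϖ j
  have heraseS : ∀ m i, 0 < i → i ≤ m → m ≤ n →
      π (∏ j ∈ Ioc 0 m, ϖ j) = π (ϖ i) * π (∏ j ∈ (Ioc 0 m).erase i, ϖ j) := by
    intro m i h1 h2 _
    rw [← map_mul, Finset.mul_prod_erase _ _ (by simp [Finset.mem_Ioc]; omega)]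
  have hUp : ∀ m, 1 ≤ m → m ≤ n - 2 → ∀ i, 1 ≤ i → i ≤ m →
      (π (ϖ i) * π (∏ j ∈ Ioc 0 m, ϖ j)
          = (i : MvPolynomial ℕ ℝ ⧸ I) * (π (ϖ 1) * π (∏ j ∈ Ioc 0 m, ϖ j)) ∧
       π (ϖ (i+1)) * π (∏ j ∈ Ioc 0 m, ϖ j)
          = ((i+1 : ℕ) : MvPolynomial ℕ ℝ ⧸ I) * (π (ϖ 1) * π (∏ j ∈ Ioc 0 m, ϖ j))) := by
    intro m hm1 hm2 i
    induction i with
    | zero => intro h; omega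
    | succ i ih =>
      intro _ hi
      rcases Nat.eq_zero_or_pos i with hi0 | hipos
      · subst hi0
        constructor
        · push_cast; ring
        · have hg := hG1 1 le_rfl (by omega)
          simp only [Nat.sub_self] at hg
          rw [hx0] at hg
          have hrw := heraseS m 1 (by omega) (by omega) (by omega)
          rw [hrw]
          push_cast
          linear_combination (π (∏ j ∈ (Ioc 0 m).erase 1, ϖ j)) * hg
      · have hIH := ih hipos (by omega)
        refine ⟨hIH.2, ?_⟩
        have hg := hG1 (i+1) (by omega) (by omega)
        have e : i + 1 - 1 = i := by omega
        rw [e] at hg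
        have hrw := heraseS m (i+1) (by omega) (by omega) (by omega)
        rw [hrw] at hIH ⊢
        push_cast at hIH ⊢
        linear_combination (π (∏ j ∈ (Ioc 0 m).erase (i+1), ϖ j)) * hg
          + 2 * hIH.2 - hIH.1
  have hB : ∀ m, m ≤ n - 2 →
      ((m+1 : ℕ) : MvPolynomial ℕ ℝ ⧸ I) * (π (ϖ 1) * π (∏ j ∈ Ioc 0 m, ϖ j))
        = π (∏ j ∈ Ioc 0 (m+1), ϖ j) := by
    intro m hm
    have hstep : (∏ j ∈ Ioc 0 (m+1), ϖ j) = (∏ j ∈ Ioc 0 m, ϖ j) * ϖ (m+1) := by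
      rw [← Finset.prod_Ioc_consecutive ϖ (show 0 ≤ m by omega) (show m ≤ m+1 by omega),
        hsing m (m+1) rfl]
    rcases Nat.eq_zero_or_pos m with h0 | hpos
    · subst h0
      rw [hstep]
      simp
    · have := (hUp m hpos hm m (by omega) le_rfl).2
      rw [hstep, map_mul]
      rw [← this]
      ring
  have hB' : ∀ j, j ≤ n - 1 →
      ((Nat.factorial j : ℕ) : MvPolynomial ℕ ℝ ⧸ I) * π (ϖ 1) ^ j
        = π (∏ j ∈ Ioc 0 j, ϖ j) := by
    intro j
    induction j with
    | zero => intro _; simp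
    | succ j ih =>
      intro hj
      have hih := ih (by omega)
      have := hB j (by omega)
      rw [← this, ← hih]
      rw [Nat.factorial_succ]
      push_cast
      ring
  -- assemble
  have hkn : k < n := by omega
  have hm1 : n - k = (n - k - 1) + 1 := by omega
  have he : n - 1 - (n - k - 1) = k := by omega
  have hA := hA' (n-k-1) (by omega)
  rw [he, ← hm1] at hA
  have hBk := hB' k hk
  have hProd : π (∏ j ∈ Finset.Icc 1 n, ϖ j)
      = ((Nat.factorial k : ℕ) : MvPolynomial ℕ ℝ ⧸ I) * (2 : MvPolynomial ℕ ℝ ⧸ I)^(n-k-1)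
        * (π (ϖ 1) ^ k * π (ϖ n) ^ (n-k)) := by
    have hIcc : Finset.Icc 1 n = Finset.Ioc 0 n := by
      rw [← Finset.Icc_add_one_left_eq_Ioc]; rfl
    rw [hIcc, ← Finset.prod_Ioc_consecutive ϖ (show 0 ≤ k by omega) (show k ≤ n by omega),
      map_mul, ← hBk, ← hA]
    ring
  constructor
  · have hr : ((Nat.factorial k : ℝ) * 2 ^ (n - k - 1)) ≠ 0 := by
      positivity
    have hsm : ((1:ℝ) / ((Nat.factorial k : ℝ) * 2 ^ (n - k - 1))) • π (∏ j ∈ Finset.Icc 1 n, ϖ j)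
        = π (MvPolynomial.C ((1:ℝ) / ((Nat.factorial k : ℝ) * 2 ^ (n - k - 1)))
            * ∏ j ∈ Finset.Icc 1 n, ϖ j) := by
      rw [← smul_eq_C_mul, hπ, ← Ideal.Quotient.mkₐ_eq_mk ℝ I, map_smul]
    rw [map_mul, map_pow, map_pow, hsm, map_mul, hProd]
    have hcast : ((Nat.factorial k : ℕ) : MvPolynomial ℕ ℝ ⧸ I) * (2 : MvPolynomial ℕ ℝ ⧸ I)^(n-k-1)
        = π (MvPolynomial.C ((Nat.factorial k : ℝ) * 2 ^ (n - k - 1))) := by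
      simp only [map_mul, map_pow, map_natCast, map_ofNat]
    have hone : π (MvPolynomial.C ((1:ℝ) / ((Nat.factorial k : ℝ) * 2 ^ (n - k - 1))))
        * (((Nat.factorial k : ℕ) : MvPolynomial ℕ ℝ ⧸ I) * (2 : MvPolynomial ℕ ℝ ⧸ I)^(n-k-1)) = 1 := by
      rw [hcast, ← map_mul, ← map_mul, one_div, inv_mul_cancel₀ hr]
      simp
    rw [← mul_assoc, hone, one_mul]
  · have h1 : Nat.factorial n = n.choose k * Nat.factorial k * Nat.factorial (n-k) :=
      (Nat.choose_mul_factorial_mul_factorial hkn.le).symm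
    have h2 : n - 1 = (n - k - 1) + k := by omega
    have hr : ((Nat.factorial k : ℝ) * 2 ^ (n - k - 1)) ≠ 0 := by positivity
    rw [h2, pow_add, h1]
    push_cast
    field_simp
end

section
/- Let R = ℝ[ϖ_1,…,ϖ_7]/I where I is generated by α_i ϖ_i for the E_7 Cartan relations (Bourbaki numbering): α_1 = 2ϖ_1 - ϖ_3, α_2 = 2ϖ_2 - ϖ_4, α_3 = -ϖ_1 + 2ϖ_3 - ϖ_4, α_4 = -ϖ_2 - ϖ_3 + 2ϖ_4 - ϖ_5, α_5 = -ϖ_4 + 2ϖ_5 - ϖ_6, α_6 = -ϖ_5 + 2ϖ_6 - ϖ_7, α_7 = -ϖ_6 + 2ϖ_7. Then in R, with P := ϖ_1 ϖ_2 ⋯ ϖ_7 and M := ϖ_1 ϖ_3 ϖ_4 ϖ_5 ϖ_6 ϖ_7: ϖ_1·M = (4/7)·P, ϖ_3·M = (8/7)·P, ϖ_4·M = (12/7)·P, ϖ_5·M = (9/7)·P, ϖ_6·M = (6/7)·P, and ϖ_7·M = (3/7)·P. -/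
open MvPolynomial

private lemma key {I : Ideal (MvPolynomial ℕ ℝ)} {a b : MvPolynomial ℕ ℝ} {k : ℝ}
    (h : (7:ℝ) • a - k • b ∈ I) :
    Ideal.Quotient.mk I a = (k/7 : ℝ) • Ideal.Quotient.mk I b := by
  have e : a - (k/7 : ℝ) • b = (1/7 : ℝ) • ((7:ℝ) • a - k • b) := by
    rw [smul_sub, smul_smul, smul_smul, show (1/7:ℝ)*7 = 1 by norm_num, one_smul,
      show (1/7:ℝ)*k = k/7 by ring]
  have hm : a - (k/7:ℝ) • b ∈ I := by
    rw [e, smul_eq_C_mul]; exact I.mul_mem_left _ h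
  have h2 : Ideal.Quotient.mk I ((k/7:ℝ) • b) = (k/7:ℝ) • Ideal.Quotient.mk I b := by
    rfl
  rw [← h2]
  exact Ideal.Quotient.eq.mpr hm

set_option maxHeartbeats 2000000 in
theorem stmt_17 (I : Ideal (MvPolynomial ℕ ℝ))
    (hI : I = Ideal.span
      {(2 * X 1 - X 3) * X 1,
       (2 * X 2 - X 4) * X 2,
       (-X 1 + 2 * X 3 - X 4) * X 3,
       (-X 2 - X 3 + 2 * X 4 - X 5) * X 4,
       (-X 4 + 2 * X 5 - X 6) * X 5,
       (-X 5 + 2 * X 6 - X 7) * X 6,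
       (-X 6 + 2 * X 7) * X 7}) :
    Ideal.Quotient.mk I (X 1 * (X 1 * X 3 * X 4 * X 5 * X 6 * X 7)) =
        (4 / 7 : ℝ) • Ideal.Quotient.mk I (X 1 * X 2 * X 3 * X 4 * X 5 * X 6 * X 7) ∧
    Ideal.Quotient.mk I (X 3 * (X 1 * X 3 * X 4 * X 5 * X 6 * X 7)) =
        (8 / 7 : ℝ) • Ideal.Quotient.mk I (X 1 * X 2 * X 3 * X 4 * X 5 * X 6 * X 7) ∧
    Ideal.Quotient.mk I (X 4 * (X 1 * X 3 * X 4 * X 5 * X 6 * X 7)) =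
        (12 / 7 : ℝ) • Ideal.Quotient.mk I (X 1 * X 2 * X 3 * X 4 * X 5 * X 6 * X 7) ∧
    Ideal.Quotient.mk I (X 5 * (X 1 * X 3 * X 4 * X 5 * X 6 * X 7)) =
        (9 / 7 : ℝ) • Ideal.Quotient.mk I (X 1 * X 2 * X 3 * X 4 * X 5 * X 6 * X 7) ∧
    Ideal.Quotient.mk I (X 6 * (X 1 * X 3 * X 4 * X 5 * X 6 * X 7)) =
        (6 / 7 : ℝ) • Ideal.Quotient.mk I (X 1 * X 2 * X 3 * X 4 * X 5 * X 6 * X 7) ∧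
    Ideal.Quotient.mk I (X 7 * (X 1 * X 3 * X 4 * X 5 * X 6 * X 7)) =
        (3 / 7 : ℝ) • Ideal.Quotient.mk I (X 1 * X 2 * X 3 * X 4 * X 5 * X 6 * X 7) := by
  have h1 : ((2 * X 1 - X 3) * X 1 : MvPolynomial ℕ ℝ) ∈ I := by rw [hI]; exact Ideal.subset_span (Set.mem_insert _ _)
  have h3 : ((-X 1 + 2 * X 3 - X 4) * X 3 : MvPolynomial ℕ ℝ) ∈ I := by rw [hI]; exact Ideal.subset_span (Set.mem_insert_of_mem _ (Set.mem_insert_of_mem _ (Set.mem_insert _ _)))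
  have h4 : ((-X 2 - X 3 + 2 * X 4 - X 5) * X 4 : MvPolynomial ℕ ℝ) ∈ I := by rw [hI]; exact Ideal.subset_span (Set.mem_insert_of_mem _ (Set.mem_insert_of_mem _ (Set.mem_insert_of_mem _ (Set.mem_insert _ _))))
  have h5 : ((-X 4 + 2 * X 5 - X 6) * X 5 : MvPolynomial ℕ ℝ) ∈ I := by rw [hI]; exact Ideal.subset_span (Set.mem_insert_of_mem _ (Set.mem_insert_of_mem _ (Set.mem_insert_of_mem _ (Set.mem_insert_of_mem _ (Set.mem_insert _ _)))))
  have h6 : ((-X 5 + 2 * X 6 - X 7) * X 6 : MvPolynomial ℕ ℝ) ∈ I := by rw [hI]; exact Ideal.subset_span (Set.mem_insert_of_mem _ (Set.mem_insert_of_mem _ (Set.mem_insert_of_mem _ (Set.mem_insert_of_mem _ (Set.mem_insert_of_mem _ (Set.mem_insert _ _))))))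
  have h7 : ((-X 6 + 2 * X 7) * X 7 : MvPolynomial ℕ ℝ) ∈ I := by rw [hI]; exact Ideal.subset_span (Set.mem_insert_of_mem _ (Set.mem_insert_of_mem _ (Set.mem_insert_of_mem _ (Set.mem_insert_of_mem _ (Set.mem_insert_of_mem _ (Set.mem_insert_of_mem _ rfl))))))
  have e1 : (7:ℝ) • (X 1 * (X 1 * X 3 * X 4 * X 5 * X 6 * X 7)) - (4:ℝ) • (X 1 * X 2 * X 3 * X 4 * X 5 * X 6 * X 7) = (6:MvPolynomial ℕ ℝ)*(X 3*X 4*X 5*X 6*X 7)*((2 * X 1 - X 3) * X 1) + (5:MvPolynomial ℕ ℝ)*(X 1*X 4*X 5*X 6*X 7)*((-X 1 + 2 * X 3 - X 4) * X 3) + (4:MvPolynomial ℕ ℝ)*(X 1*X 3*X 5*X 6*X 7)*((-X 2 - X 3 + 2 * X 4 - X 5) * X 4) + (3:MvPolynomial ℕ ℝ)*(X 1*X 3*X 4*X 6*X 7)*((-X 4 + 2 * X 5 - X 6) * X 5) + (2:MvPolynomial ℕ ℝ)*(X 1*X 3*X 4*X 5*X 7)*((-X 5 + 2 * X 6 - X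 7) * X 6) + (1:MvPolynomial ℕ ℝ)*(X 1*X 3*X 4*X 5*X 6)*((-X 6 + 2 * X 7) * X 7) := by
    simp only [smul_eq_C_mul, map_ofNat]; ring
  have e3 : (7:ℝ) • (X 3 * (X 1 * X 3 * X 4 * X 5 * X 6 * X 7)) - (8:ℝ) • (X 1 * X 2 * X 3 * X 4 * X 5 * X 6 * X 7) = (5:MvPolynomial ℕ ℝ)*(X 3*X 4*X 5*X 6*X 7)*((2 * X 1 - X 3) * X 1) + (10:MvPolynomial ℕ ℝ)*(X 1*X 4*X 5*X 6*X 7)*((-X 1 + 2 * X 3 - X 4) * X 3) + (8:MvPolynomial ℕ ℝ)*(X 1*X 3*X 5*X 6*X 7)*((-X 2 - X 3 + 2 * X 4 - X 5) * X 4) + (6:MvPolynomial ℕ ℝ)*(X 1*X 3*X 4*X 6*X 7)*((-X 4 + 2 * X 5 - X 6) * X 5) + (4:MvPolynomial ℕ ℝ)*(X 1*X 3*X 4*X 5*X 7)*((-X 5 + 2 * X 6 - X 7) * X 6) + (2:MvPolynomial ℕ ℝ)*(X 1*X 3*X 4*X 5*X 6)*((-X 6 + 2 * X 7) * X 7) :=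 by
    simp only [smul_eq_C_mul, map_ofNat]; ring
  have e4 : (7:ℝ) • (X 4 * (X 1 * X 3 * X 4 * X 5 * X 6 * X 7)) - (12:ℝ) • (X 1 * X 2 * X 3 * X 4 * X 5 * X 6 * X 7) = (4:MvPolynomial ℕ ℝ)*(X 3*X 4*X 5*X 6*X 7)*((2 * X 1 - X 3) * X 1) + (8:MvPolynomial ℕ ℝ)*(X 1*X 4*X 5*X 6*X 7)*((-X 1 + 2 * X 3 - X 4) * X 3) + (12:MvPolynomial ℕ ℝ)*(X 1*X 3*X 5*X 6*X 7)*((-X 2 - X 3 + 2 * X 4 - X 5) * X 4) + (9:MvPolynomial ℕ ℝ)*(X 1*X 3*X 4*X 6*X 7)*((-X 4 + 2 * X 5 - X 6) * X 5) + (6:MvPolynomial ℕ ℝ)*(X 1*X 3*X 4*X 5*X 7)*((-X 5 + 2 * X 6 - X 7) * X 6) + (3:MvPolynomial ℕ ℝ)*(X 1*X 3*X 4*X 5*X 6)*((-X 6 + 2 * X 7) * X 7) := by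
    simp only [smul_eq_C_mul, map_ofNat]; ring
  have e5 : (7:ℝ) • (X 5 * (X 1 * X 3 * X 4 * X 5 * X 6 * X 7)) - (9:ℝ) • (X 1 * X 2 * X 3 * X 4 * X 5 * X 6 * X 7) = (3:MvPolynomial ℕ ℝ)*(X 3*X 4*X 5*X 6*X 7)*((2 * X 1 - X 3) * X 1) + (6:MvPolynomial ℕ ℝ)*(X 1*X 4*X 5*X 6*X 7)*((-X 1 + 2 * X 3 - X 4) * X 3) + (9:MvPolynomial ℕ ℝ)*(X 1*X 3*X 5*X 6*X 7)*((-X 2 - X 3 + 2 * X 4 - X 5) * X 4) + (12:MvPolynomial ℕ ℝ)*(X 1*X 3*X 4*X 6*X 7)*((-X 4 + 2 * X 5 - X 6) * X 5) + (8:MvPolynomial ℕ ℝ)*(X 1*X 3*X 4*X 5*X 7)*((-X 5 + 2 * X 6 - X 7) * X 6) + (4:MvPolynomial ℕ ℝ)*(X 1*X 3*X 4*X 5*X 6)*((-X 6 + 2 * X 7) * X 7) := by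
    simp only [smul_eq_C_mul, map_ofNat]; ring
  have e6 : (7:ℝ) • (X 6 * (X 1 * X 3 * X 4 * X 5 * X 6 * X 7)) - (6:ℝ) • (X 1 * X 2 * X 3 * X 4 * X 5 * X 6 * X 7) = (2:MvPolynomial ℕ ℝ)*(X 3*X 4*X 5*X 6*X 7)*((2 * X 1 - X 3) * X 1) + (4:MvPolynomial ℕ ℝ)*(X 1*X 4*X 5*X 6*X 7)*((-X 1 + 2 * X 3 - X 4) * X 3) + (6:MvPolynomial ℕ ℝ)*(X 1*X 3*X 5*X 6*X 7)*((-X 2 - X 3 + 2 * X 4 - X 5) * X 4) + (8:MvPolynomial ℕ ℝ)*(X 1*X 3*X 4*X 6*X 7)*((-X 4 + 2 * X 5 - X 6) * X 5) + (10:MvPolynomial ℕ ℝ)*(X 1*X 3*X 4*X 5*X 7)*((-X 5 + 2 * X 6 - X 7) * X 6) + (5:MvPolynomial ℕ ℝ)*(X 1*X 3*X 4*X 5*X 6)*((-X 6 + 2 * X 7) * X 7) := by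
    simp only [smul_eq_C_mul, map_ofNat]; ring
  have e7 : (7:ℝ) • (X 7 * (X 1 * X 3 * X 4 * X 5 * X 6 * X 7)) - (3:ℝ) • (X 1 * X 2 * X 3 * X 4 * X 5 * X 6 * X 7) = (1:MvPolynomial ℕ ℝ)*(X 3*X 4*X 5*X 6*X 7)*((2 * X 1 - X 3) * X 1) + (2:MvPolynomial ℕ ℝ)*(X 1*X 4*X 5*X 6*X 7)*((-X 1 + 2 * X 3 - X 4) * X 3) + (3:MvPolynomial ℕ ℝ)*(X 1*X 3*X 5*X 6*X 7)*((-X 2 - X 3 + 2 * X 4 - X 5) * X 4) + (4:MvPolynomial ℕ ℝ)*(X 1*X 3*X 4*X 6*X 7)*((-X 4 + 2 * X 5 - X 6) * X 5) + (5:MvPolynomial ℕ ℝ)*(X 1*X 3*X 4*X 5*X 7)*((-X 5 + 2 * X 6 - X 7) * X 6) + (6:MvPolynomial ℕ ℝ)*(X 1*X 3*X 4*X 5*X 6)*((-X 6 + 2 * X 7) * X 7) := by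
    simp only [smul_eq_C_mul, map_ofNat]; ring
  have m1 : (7:ℝ) • (X 1 * (X 1 * X 3 * X 4 * X 5 * X 6 * X 7)) - (4:ℝ) • (X 1 * X 2 * X 3 * X 4 * X 5 * X 6 * X 7) ∈ I := by
    rw [e1]
    exact add_mem (add_mem (add_mem (add_mem (add_mem (I.mul_mem_left _ h1) (I.mul_mem_left _ h3)) (I.mul_mem_left _ h4)) (I.mul_mem_left _ h5)) (I.mul_mem_left _ h6)) (I.mul_mem_left _ h7)
  have m3 : (7:ℝ) • (X 3 * (X 1 * X 3 * X 4 * X 5 * X 6 * X 7)) - (8:ℝ) • (X 1 * X 2 * X 3 * X 4 * X 5 * X 6 * X 7) ∈ I := by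
    rw [e3]
    exact add_mem (add_mem (add_mem (add_mem (add_mem (I.mul_mem_left _ h1) (I.mul_mem_left _ h3)) (I.mul_mem_left _ h4)) (I.mul_mem_left _ h5)) (I.mul_mem_left _ h6)) (I.mul_mem_left _ h7)
  have m4 : (7:ℝ) • (X 4 * (X 1 * X 3 * X 4 * X 5 * X 6 * X 7)) - (12:ℝ) • (X 1 * X 2 * X 3 * X 4 * X 5 * X 6 * X 7) ∈ I := by
    rw [e4]
    exact add_mem (add_mem (add_mem (add_mem (add_mem (I.mul_mem_left _ h1) (I.mul_mem_left _ h3)) (I.mul_mem_left _ h4)) (I.mul_mem_left _ h5)) (I.mul_mem_left _ h6)) (I.mul_mem_left _ h7)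
  have m5 : (7:ℝ) • (X 5 * (X 1 * X 3 * X 4 * X 5 * X 6 * X 7)) - (9:ℝ) • (X 1 * X 2 * X 3 * X 4 * X 5 * X 6 * X 7) ∈ I := by
    rw [e5]
    exact add_mem (add_mem (add_mem (add_mem (add_mem (I.mul_mem_left _ h1) (I.mul_mem_left _ h3)) (I.mul_mem_left _ h4)) (I.mul_mem_left _ h5)) (I.mul_mem_left _ h6)) (I.mul_mem_left _ h7)
  have m6 : (7:ℝ) • (X 6 * (X 1 * X 3 * X 4 * X 5 * X 6 * X 7)) - (6:ℝ) • (X 1 * X 2 * X 3 * X 4 * X 5 * X 6 * X 7) ∈ I := by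
    rw [e6]
    exact add_mem (add_mem (add_mem (add_mem (add_mem (I.mul_mem_left _ h1) (I.mul_mem_left _ h3)) (I.mul_mem_left _ h4)) (I.mul_mem_left _ h5)) (I.mul_mem_left _ h6)) (I.mul_mem_left _ h7)
  have m7 : (7:ℝ) • (X 7 * (X 1 * X 3 * X 4 * X 5 * X 6 * X 7)) - (3:ℝ) • (X 1 * X 2 * X 3 * X 4 * X 5 * X 6 * X 7) ∈ I := by
    rw [e7]
    exact add_mem (add_mem (add_mem (add_mem (add_mem (I.mul_mem_left _ h1) (I.mul_mem_left _ h3)) (I.mul_mem_left _ h4)) (I.mul_mem_left _ h5)) (I.mul_mem_left _ h6)) (I.mul_mem_left _ h7)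
  exact ⟨key m1, key m3, key m4, key m5, key m6, key m7⟩
end

section
/- Let R = ℝ[ϖ_1,…,ϖ_{n-1}]/(α_i ϖ_i : 1 ≤ i ≤ n-1) with α_i := -ϖ_{i-1} + 2ϖ_i - ϖ_{i+1} and ϖ_0 = ϖ_n = 0 (type A_{n-1} relations). Then for any multiset of indices i_1,…,i_{n-1} ∈ {1,…,n-1}, the product ϖ_{i_1} ϖ_{i_2} ⋯ ϖ_{i_{n-1}} is a non-negative rational multiple of the square-free monomial ϖ_1 ϖ_2 ⋯ ϖ_{n-1} in R. -/
open MvPolynomial Finset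

namespace Stmt18

noncomputable section

def P (ϖ : ℕ → MvPolynomial ℕ ℝ) (m : Multiset ℕ) : MvPolynomial ℕ ℝ :=
  (m.map ϖ).prod

def sqfm (n : ℕ) : Multiset ℕ := (Finset.Icc 1 (n-1)).val

def TT (n : ℕ) : Finset (Multiset ℕ) :=
  ((((Finset.Icc 1 (n-1)).sym (n-1)).image Sym.toMultiset)).erase (sqfm n)

open Classical in
def kk (m : Multiset ℕ) : ℕ :=
  if h : ∃ k, 2 ≤ m.count k then h.choose else 0

def mL (m : Multiset ℕ) : Multiset ℕ := (kk m - 1) ::ₘ m.erase (kk m)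
def mR (m : Multiset ℕ) : Multiset ℕ := (kk m + 1) ::ₘ m.erase (kk m)

lemma card_sqfm (n : ℕ) : Multiset.card (sqfm n) = n - 1 := by
  simp [sqfm]

lemma mem_sqfm {n a : ℕ} : a ∈ sqfm n ↔ 1 ≤ a ∧ a ≤ n - 1 := by
  simp [sqfm]

lemma mem_TT {n : ℕ} {m : Multiset ℕ} :
    m ∈ TT n ↔ m ≠ sqfm n ∧ Multiset.card m = n - 1 ∧ ∀ a ∈ m, 1 ≤ a ∧ a ≤ n - 1 := by
  unfold TT
  rw [Finset.mem_erase]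
  constructor
  · rintro ⟨hne, hm⟩
    obtain ⟨s, hs, rfl⟩ := Finset.mem_image.mp hm
    refine ⟨hne, s.2, fun a ha => ?_⟩
    have := Finset.mem_sym_iff.mp hs a ha
    simpa using this
  · rintro ⟨hne, hcard, hmem⟩
    refine ⟨hne, Finset.mem_image.mpr ⟨(⟨m, hcard⟩ : Sym ℕ (n - 1)), ?_, rfl⟩⟩
    apply Finset.mem_sym_iff.mpr
    intro a ha
    exact Finset.mem_Icc.mpr (hmem a ha)

lemma sqfm_not_mem_TT {n : ℕ} : sqfm n ∉ TT n := by
  simp [TT]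

lemma exists_two {n : ℕ} {m : Multiset ℕ} (h : m ∈ TT n) : ∃ k, 2 ≤ m.count k := by
  obtain ⟨hne, hcard, hmem⟩ := mem_TT.mp h
  by_contra h'
  push_neg at h'
  have hle : m ≤ sqfm n := by
    rw [Multiset.le_iff_count]
    intro a
    by_cases ha : a ∈ m
    · have h1 : m.count a ≤ 1 := by have := h' a; omega
      have h2 : 1 ≤ (sqfm n).count a :=
        Multiset.count_pos.mpr (mem_sqfm.mpr (hmem a ha))
      omega
    · simp [Multiset.count_eq_zero_of_notMem ha]
  exact hne (Multiset.eq_of_le_of_card_le hle (by rw [card_sqfm, hcard]))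

lemma two_le_count_kk {n : ℕ} {m : Multiset ℕ} (h : m ∈ TT n) : 2 ≤ m.count (kk m) := by
  have he := exists_two h
  rw [kk]
  rw [dif_pos he]
  exact he.choose_spec

lemma kk_mem {n : ℕ} {m : Multiset ℕ} (h : m ∈ TT n) : kk m ∈ m := by
  have := two_le_count_kk h
  exact Multiset.count_pos.mp (by omega)

lemma kk_range {n : ℕ} {m : Multiset ℕ} (h : m ∈ TT n) : 1 ≤ kk m ∧ kk m ≤ n - 1 :=
  (mem_TT.mp h).2.2 _ (kk_mem h)

lemma kk_mem_erase {n : ℕ} {m : Multiset ℕ} (h : m ∈ TT n) : kk m ∈ m.erase (kk m) := by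
  have h2 := two_le_count_kk h
  have := Multiset.count_erase_self (kk m) m
  exact Multiset.count_pos.mp (by omega)

lemma card_mL {n : ℕ} {m : Multiset ℕ} (h : m ∈ TT n) :
    Multiset.card (mL m) = Multiset.card m := by
  rw [mL, Multiset.card_cons, Multiset.card_erase_of_mem (kk_mem h)]
  have h1 : 0 < Multiset.card m := Multiset.card_pos_iff_exists_mem.mpr ⟨_, kk_mem h⟩
  rw [Nat.pred_eq_sub_one]
  omega

lemma card_mR {n : ℕ} {m : Multiset ℕ} (h : m ∈ TT n) :
    Multiset.card (mR m) = Multiset.card m := by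
  rw [mR, Multiset.card_cons, Multiset.card_erase_of_mem (kk_mem h)]
  have h1 : 0 < Multiset.card m := Multiset.card_pos_iff_exists_mem.mpr ⟨_, kk_mem h⟩
  rw [Nat.pred_eq_sub_one]
  omega

lemma sum_mR {n : ℕ} {m : Multiset ℕ} (h : m ∈ TT n) : (mR m).sum = m.sum + 1 := by
  have hc : kk m ::ₘ m.erase (kk m) = m := Multiset.cons_erase (kk_mem h)
  have h1 : m.sum = kk m + (m.erase (kk m)).sum := by
    conv_lhs => rw [← hc]
    rw [Multiset.sum_cons]
  rw [mR, Multiset.sum_cons]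
  omega

lemma sum_le {n : ℕ} {m : Multiset ℕ} (h : m ∈ TT n) : m.sum ≤ (n-1)*(n-1) := by
  obtain ⟨-, hcard, hmem⟩ := mem_TT.mp h
  have := Multiset.sum_le_card_nsmul m (n-1) (fun x hx => (hmem x hx).2)
  rw [hcard] at this
  simpa [Nat.smul_one_eq_cast, smul_eq_mul] using this


def Qm (n : ℕ) : Matrix ↥(TT n) ↥(TT n) ℚ :=
  fun i j => (if mL ↑i = ↑j then 1/2 else 0) + (if mR ↑i = ↑j then 1/2 else 0)

def Am (n : ℕ) : Matrix ↥(TT n) ↥(TT n) ℚ := 1 - Qm n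

def bv (n : ℕ) : ↥(TT n) → ℚ :=
  fun i => (if mL ↑i = sqfm n then 1/2 else 0) + (if mR ↑i = sqfm n then 1/2 else 0)

lemma sum_ite_val {n : ℕ} {M : Type*} [AddCommMonoid M] (c : Multiset ℕ) (g : ↥(TT n) → M) :
    (∑ j : ↥(TT n), if c = ↑j then g j else 0) =
      if h : c ∈ TT n then g ⟨c, h⟩ else 0 := by
  split_ifs with h
  · rw [Finset.sum_eq_single_of_mem (⟨c, h⟩ : ↥(TT n)) (Finset.mem_univ _)]
    · rw [if_pos rfl]
    · intro j _ hj
      rw [if_neg]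
      intro e
      exact hj (Subtype.ext e.symm)
  · apply Finset.sum_eq_zero
    intro j _
    rw [if_neg]
    intro e
    exact h (e ▸ j.2)

lemma mulVecA {n : ℕ} {M : Type*} [AddCommGroup M] [Module ℚ M]
    (w : ↥(TT n) → M) (wh : Multiset ℕ → M)
    (hwh : ∀ (c : Multiset ℕ) (h : c ∈ TT n), wh c = w ⟨c, h⟩)
    (hwh0 : ∀ c, c ∉ TT n → wh c = 0) (i : ↥(TT n)) :
    ∑ j : ↥(TT n), (Am n i j) • w j
      = w i - (1/2 : ℚ) • wh (mL ↑i) - (1/2 : ℚ) • wh (mR ↑i) := by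
  have key : ∀ c : Multiset ℕ,
      (∑ j : ↥(TT n), (if c = ↑j then (1/2 : ℚ) else 0) • w j) = (1/2 : ℚ) • wh c := by
    intro c
    have : (∑ j : ↥(TT n), (if c = ↑j then (1/2 : ℚ) else 0) • w j)
        = ∑ j : ↥(TT n), (if c = ↑j then (1/2 : ℚ) • w j else 0) := by
      apply Finset.sum_congr rfl
      intro j _
      split_ifs <;> simp
    rw [this, sum_ite_val]
    split_ifs with h
    · rw [hwh _ h]
    · rw [hwh0 _ h, smul_zero]
  have expand : ∀ j : ↥(TT n), (Am n i j) • w j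
      = (if i = j then w j else 0)
        - (if mL ↑i = ↑j then (1/2 : ℚ) else 0) • w j
        - (if mR ↑i = ↑j then (1/2 : ℚ) else 0) • w j := by
    intro j
    simp only [Am, Qm, Matrix.sub_apply, Matrix.one_apply]
    rw [sub_add_eq_sub_sub]
    split_ifs <;> simp <;> module
  calc ∑ j : ↥(TT n), (Am n i j) • w j
      = (∑ j : ↥(TT n), if i = j then w j else 0)
        - (∑ j : ↥(TT n), (if mL ↑i = ↑j then (1/2 : ℚ) else 0) • w j)
        - (∑ j : ↥(TT n), (if mR ↑i = ↑j then (1/2 : ℚ) else 0) • w j) := by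
        rw [← Finset.sum_sub_distrib, ← Finset.sum_sub_distrib]
        exact Finset.sum_congr rfl (fun j _ => expand j)
    _ = w i - (1/2 : ℚ) • wh (mL ↑i) - (1/2 : ℚ) • wh (mR ↑i) := by
        rw [key, key, Finset.sum_ite_eq, if_pos (Finset.mem_univ i)]

lemma minp {n : ℕ} (w : Multiset ℕ → ℚ)
    (hrec : ∀ m ∈ TT n, w m = (1/2) * w (mL m) + (1/2) * w (mR m))
    (hbd : ∀ m, m ∉ TT n → 0 ≤ w m) : ∀ m, 0 ≤ w m := by
  by_contra hc
  push_neg at hc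
  obtain ⟨m₀, hm₀⟩ := hc
  have hm₀T : m₀ ∈ TT n := by
    by_contra h
    exact absurd (hbd _ h) (not_le.mpr hm₀)
  have hne : ((TT n).image w).Nonempty := ⟨w m₀, Finset.mem_image_of_mem _ hm₀T⟩
  set μ := ((TT n).image w).min' hne with hμ
  have hμle : ∀ m ∈ TT n, μ ≤ w m := fun m hm =>
    Finset.min'_le _ _ (Finset.mem_image_of_mem _ hm)
  have hμneg : μ < 0 := lt_of_le_of_lt (hμle _ hm₀T) hm₀
  obtain ⟨i₀, hi₀T, hi₀⟩ := Finset.mem_image.mp (Finset.min'_mem _ hne)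
  have claim : ∀ s : ℕ, ∀ m ∈ TT n, w m = μ → (n-1)*(n-1) + 1 - m.sum ≤ s → False := by
    intro s
    induction s with
    | zero =>
      intro m hm _ hs
      have h1 : m.sum ≤ (n-1)*(n-1) := sum_le hm
      omega
    | succ s ih =>
      intro m hm hw hs
      have hrec' := hrec m hm
      have hL : μ ≤ w (mL m) := by
        by_cases h : mL m ∈ TT n
        · exact hμle _ h
        · exact le_of_lt (lt_of_lt_of_le hμneg (hbd _ h))
      have hR : μ ≤ w (mR m) := by
        by_cases h : mR m ∈ TT n
        · exact hμle _ h
        · exact le_of_lt (lt_of_lt_of_le hμneg (hbd _ h))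
      have hwR : w (mR m) = μ := by linarith
      have hRT : mR m ∈ TT n := by
        by_contra h
        have := hbd _ h
        rw [hwR] at this
        linarith
      have hsum := sum_mR hm
      have hb : (mR m).sum ≤ (n-1)*(n-1) := sum_le hRT
      exact ih (mR m) hRT hwR (by omega)
  exact claim ((n-1)*(n-1)+1) i₀ hi₀T hi₀ (by omega)

lemma rsmul_mem {I : Ideal (MvPolynomial ℕ ℝ)} (r : ℝ) {x : MvPolynomial ℕ ℝ}
    (h : x ∈ I) : r • x ∈ I := by
  rw [MvPolynomial.smul_eq_C_mul]
  exact Ideal.mul_mem_left _ _ h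

lemma ratsmul (a : ℚ) (x : MvPolynomial ℕ ℝ) : a • x = (a : ℝ) • x := by
  rw [← algebraMap_smul (R := ℚ) ℝ a x, eq_ratCast (algebraMap ℚ ℝ) a]

lemma P_cons (ϖ : ℕ → MvPolynomial ℕ ℝ) (a : ℕ) (t : Multiset ℕ) :
    P ϖ (a ::ₘ t) = ϖ a * P ϖ t := by
  simp [P]

set_option maxHeartbeats 2000000 in
lemma main {n : ℕ} (hn : 2 ≤ n) (ϖ : ℕ → MvPolynomial ℕ ℝ)
    (hϖ : ∀ k, ϖ k = if 1 ≤ k ∧ k ≤ n - 1 then X k else 0)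
    (I : Ideal (MvPolynomial ℕ ℝ))
    (hI : I = Ideal.span {p | ∃ k, 1 ≤ k ∧ k ≤ n - 1 ∧
      p = (-ϖ (k - 1) + 2 * ϖ k - ϖ (k + 1)) * ϖ k})
    (m : Multiset ℕ) (hcard : Multiset.card m = n - 1)
    (hmem : ∀ x ∈ m, 1 ≤ x ∧ x ≤ n - 1) :
    ∃ q : ℚ, 0 ≤ q ∧ P ϖ m - (q : ℝ) • P ϖ (sqfm n) ∈ I := by
  classical
  by_cases hsq : m = sqfm n
  · exact ⟨1, by norm_num, by simp [hsq]⟩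
  have hmT : m ∈ TT n := mem_TT.mpr ⟨hsq, hcard, hmem⟩
  -- the matrix is invertible
  have hdet : (Am n).det ≠ 0 := by
    intro hdet0
    obtain ⟨v, hv0, hv⟩ := Matrix.exists_mulVec_eq_zero_iff.mpr hdet0
    set vh : Multiset ℕ → ℚ := fun c => if h : c ∈ TT n then v ⟨c, h⟩ else 0 with hvh
    have hrec : ∀ c ∈ TT n, vh c = 1/2 * vh (mL c) + 1/2 * vh (mR c) := by
      intro c hc
      have h1 := congrFun hv ⟨c, hc⟩
      have h2 := mulVecA (n := n) v vh (fun c h => dif_pos h) (fun c h => dif_neg h) ⟨c, hc⟩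
      simp only [smul_eq_mul] at h2
      have h3 : (Am n).mulVec v ⟨c, hc⟩ = ∑ j : ↥(TT n), Am n ⟨c, hc⟩ j * v j := by
        rfl
      rw [h3, h2] at h1
      simp only [Pi.zero_apply] at h1
      have h4 : vh c = v ⟨c, hc⟩ := dif_pos hc
      rw [h4]
      linarith [h1]
    have hbd : ∀ c, c ∉ TT n → 0 ≤ vh c := fun c h => by simp [hvh, dif_neg h]
    have hbd' : ∀ c, c ∉ TT n → 0 ≤ -vh c := fun c h => by simp [hvh, dif_neg h]
    have hpos := minp vh hrec hbd
    have hneg := minp (fun c => -vh c) (by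
      intro c hc
      have := hrec c hc
      linarith) hbd'
    apply hv0
    funext i
    have e1 : vh ↑i = v i := by simp [hvh]
    have := hpos ↑i
    have := hneg ↑i
    have : v i = 0 := by rw [← e1]; linarith
    simpa using this
  have hunit : IsUnit (Am n).det := isUnit_iff_ne_zero.mpr hdet
  have hAB : Am n * (Am n)⁻¹ = 1 := Matrix.mul_nonsing_inv _ hunit
  have hBA : (Am n)⁻¹ * Am n = 1 := Matrix.nonsing_inv_mul _ hunit
  set B := (Am n)⁻¹ with hB
  set qv : ↥(TT n) → ℚ := B.mulVec (bv n) with hqv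
  have hq : (Am n).mulVec qv = bv n := by
    rw [hqv, Matrix.mulVec_mulVec, hAB, Matrix.one_mulVec]
  set qh : Multiset ℕ → ℚ :=
    fun c => if h : c ∈ TT n then qv ⟨c, h⟩ else if c = sqfm n then 1 else 0 with hqh
  set qt : Multiset ℕ → ℚ := fun c => if h : c ∈ TT n then qv ⟨c, h⟩ else 0 with hqt
  have hqhqt : ∀ c, qh c = qt c + (if c = sqfm n then 1 else 0) := by
    intro c
    by_cases h : c ∈ TT n
    · have hne : c ≠ sqfm n := fun e => sqfm_not_mem_TT (e ▸ h)
      simp [hqh, hqt, dif_pos h, hne]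
    · simp [hqh, hqt, dif_neg h]
  have hqhrec : ∀ c ∈ TT n, qh c = 1/2 * qh (mL c) + 1/2 * qh (mR c) := by
    intro c hc
    have h1 := congrFun hq ⟨c, hc⟩
    have h2 := mulVecA (n := n) qv qt (fun c h => dif_pos h) (fun c h => dif_neg h) ⟨c, hc⟩
    simp only [smul_eq_mul] at h2
    have h3 : (Am n).mulVec qv ⟨c, hc⟩ = ∑ j : ↥(TT n), Am n ⟨c, hc⟩ j * qv j := rfl
    rw [h3, h2] at h1
    have h4 : qh c = qt c := by
      have hne : c ≠ sqfm n := fun e => sqfm_not_mem_TT (e ▸ hc)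
      rw [hqhqt, if_neg hne, add_zero]
    have h5 : qt c = qv ⟨c, hc⟩ := by simp [hqt, dif_pos hc]
    have hbL := hqhqt (mL c)
    have hbR := hqhqt (mR c)
    have hbv : bv n ⟨c, hc⟩ = (if mL c = sqfm n then (1:ℚ)/2 else 0)
        + (if mR c = sqfm n then (1:ℚ)/2 else 0) := rfl
    rw [hbv] at h1
    rw [h4, h5]
    split_ifs at * <;> linarith
  have hqh0 : ∀ c, c ∉ TT n → 0 ≤ qh c := by
    intro c h
    simp only [hqh, dif_neg h]
    split_ifs <;> norm_num
  have hqhpos : ∀ c, 0 ≤ qh c := minp qh hqhrec hqh0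
  -- ring side
  set vP : Multiset ℕ → MvPolynomial ℕ ℝ :=
    fun c => P ϖ c - ((qh c : ℝ)) • P ϖ (sqfm n) with hvP
  have hvPsq : vP (sqfm n) = 0 := by
    simp only [hvP, hqh, dif_neg sqfm_not_mem_TT, if_pos rfl]
    norm_num
  have hdead : ∀ c, Multiset.card c = n - 1 → c ∉ TT n → c ≠ sqfm n → vP c = 0 := by
    intro c hcardc hcT hcs
    have : ¬(∀ a ∈ c, 1 ≤ a ∧ a ≤ n - 1) := by
      intro hall
      exact hcT (mem_TT.mpr ⟨hcs, hcardc, hall⟩)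
    push_neg at this
    obtain ⟨x, hx, hxr⟩ := this
    have hϖx : ϖ x = 0 := by
      rw [hϖ x, if_neg]
      rintro ⟨a, b⟩
      have := hxr a
      omega
    have hP0 : P ϖ c = 0 := by
      apply Multiset.prod_eq_zero
      rw [← hϖx]
      exact Multiset.mem_map_of_mem ϖ hx
    have hq0 : qh c = 0 := by
      simp only [hqh, dif_neg hcT, if_neg hcs]
    simp [hvP, hP0, hq0]
  have hvP0 : ∀ c ∈ TT n, (mL c ∉ TT n → vP (mL c) = 0) ∧ (mR c ∉ TT n → vP (mR c) = 0) := by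
    intro c hc
    constructor
    · intro h
      by_cases hs : mL c = sqfm n
      · rw [hs]; exact hvPsq
      · exact hdead _ (by rw [card_mL hc, (mem_TT.mp hc).2.1]) h hs
    · intro h
      by_cases hs : mR c = sqfm n
      · rw [hs]; exact hvPsq
      · exact hdead _ (by rw [card_mR hc, (mem_TT.mp hc).2.1]) h hs
  have hE2 : ∀ c ∈ TT n,
      P ϖ c + P ϖ c - P ϖ (mL c) - P ϖ (mR c) ∈ I := by
    intro c hc
    obtain ⟨hk1, hk2⟩ := kk_range hc
    have hkm := kk_mem hc
    have hke := kk_mem_erase hc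
    have hce : kk c ::ₘ c.erase (kk c) = c := Multiset.cons_erase hkm
    have hce2 : kk c ::ₘ (c.erase (kk c)).erase (kk c) = c.erase (kk c) :=
      Multiset.cons_erase hke
    have e0 : P ϖ (c.erase (kk c)) = ϖ (kk c) * P ϖ ((c.erase (kk c)).erase (kk c)) := by
      rw [← hce2, P_cons]
      rw [Multiset.erase_cons_head]
    have e1 : P ϖ c = ϖ (kk c) * (ϖ (kk c) * P ϖ ((c.erase (kk c)).erase (kk c))) := by
      conv_lhs => rw [← hce]
      rw [P_cons, e0]
    have e2 : P ϖ (mL c) = ϖ (kk c - 1) * (ϖ (kk c) * P ϖ ((c.erase (kk c)).erase (kk c))) := by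
      rw [mL, P_cons, e0]
    have e3 : P ϖ (mR c) = ϖ (kk c + 1) * (ϖ (kk c) * P ϖ ((c.erase (kk c)).erase (kk c))) := by
      rw [mR, P_cons, e0]
    have key : P ϖ c + P ϖ c - P ϖ (mL c) - P ϖ (mR c)
        = (((-ϖ (kk c - 1) + 2 * ϖ (kk c) - ϖ (kk c + 1)) * ϖ (kk c))
            * P ϖ ((c.erase (kk c)).erase (kk c))) := by
      rw [e1, e2, e3]
      ring
    rw [key, hI]
    exact Ideal.mul_mem_right _ _ (Ideal.subset_span ⟨kk c, hk1, hk2, rfl⟩)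
  have hC1 : ∀ i : ↥(TT n),
      vP ↑i - (1/2 : ℚ) • vP (mL ↑i) - (1/2 : ℚ) • vP (mR ↑i) ∈ I := by
    intro i
    have hreci := hqhrec ↑i i.2
    have z : (qh ↑i + qh ↑i - qh (mL ↑i) - qh (mR ↑i) : ℚ) = 0 := by linarith
    have e : vP ↑i - (1/2 : ℚ) • vP (mL ↑i) - (1/2 : ℚ) • vP (mR ↑i)
        = ((1:ℝ)/2) • ((P ϖ ↑i + P ϖ ↑i - P ϖ (mL ↑i) - P ϖ (mR ↑i))
          - (((qh ↑i + qh ↑i - qh (mL ↑i) - qh (mR ↑i) : ℚ) : ℝ)) • P ϖ (sqfm n)) := by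
      simp only [hvP, ratsmul]
      push_cast
      module
    rw [e, z]
    push_cast
    rw [zero_smul, sub_zero]
    exact rsmul_mem _ (hE2 ↑i i.2)
  have hC2 : ∀ i : ↥(TT n), (∑ j : ↥(TT n), Am n i j • vP ↑j) ∈ I := by
    intro i
    set vt : Multiset ℕ → MvPolynomial ℕ ℝ := fun c => if h : c ∈ TT n then vP c else 0
      with hvt
    have h2 := mulVecA (n := n) (fun j => vP ↑j) vt
      (fun c h => by simp only [hvt]; rw [dif_pos h]) (fun c h => by simp only [hvt]; rw [dif_neg h]) i
    rw [h2]
    have hL : vt (mL ↑i) = vP (mL ↑i) := by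
      by_cases h : mL ↑i ∈ TT n
      · simp only [hvt]; rw [dif_pos h]
      · simp only [hvt]; rw [dif_neg h]
        exact ((hvP0 ↑i i.2).1 h).symm
    have hR : vt (mR ↑i) = vP (mR ↑i) := by
      by_cases h : mR ↑i ∈ TT n
      · simp only [hvt]; rw [dif_pos h]
      · simp only [hvt]; rw [dif_neg h]
        exact ((hvP0 ↑i i.2).2 h).symm
    rw [hL, hR]
    exact hC1 i
  have hswap : (∑ k2 : ↥(TT n), B ⟨m, hmT⟩ k2 • ∑ j : ↥(TT n), Am n k2 j • vP ↑j)
      = ∑ j : ↥(TT n), ((B * Am n) ⟨m, hmT⟩ j) • vP ↑j := by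
    simp only [Finset.smul_sum, smul_smul]
    rw [Finset.sum_comm]
    refine Finset.sum_congr rfl (fun j _ => ?_)
    rw [Matrix.mul_apply, Finset.sum_smul]
  have h4 : vP m = ∑ j : ↥(TT n), ((1 : Matrix ↥(TT n) ↥(TT n) ℚ) ⟨m, hmT⟩ j) • vP ↑j := by
    have hone : ∀ j : ↥(TT n), ((1 : Matrix ↥(TT n) ↥(TT n) ℚ) ⟨m, hmT⟩ j) • vP ↑j
        = if (⟨m, hmT⟩ : ↥(TT n)) = j then vP ↑j else 0 := by
      intro j
      rw [Matrix.one_apply]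
      split_ifs <;> simp
    rw [Finset.sum_congr rfl (fun j _ => hone j), Finset.sum_ite_eq,
      if_pos (Finset.mem_univ _)]
  have h5 : vP m ∈ I := by
    rw [h4, ← hBA, ← hswap]
    refine Ideal.sum_mem I (fun k2 _ => ?_)
    rw [ratsmul]
    exact rsmul_mem _ (hC2 k2)
  refine ⟨qh m, hqhpos m, ?_⟩
  have := h5
  simpa [hvP] using this


end
end Stmt18

open Stmt18 in
theorem stmt_18 (n : ℕ) (hn : 2 ≤ n)
    (ϖ : ℕ → MvPolynomial ℕ ℝ)
    (hϖ : ∀ k, ϖ k = if 1 ≤ k ∧ k ≤ n - 1 then X k else 0)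
    (I : Ideal (MvPolynomial ℕ ℝ))
    (hI : I = Ideal.span
      {p | ∃ k, 1 ≤ k ∧ k ≤ n - 1 ∧
        p = (-ϖ (k - 1) + 2 * ϖ k - ϖ (k + 1)) * ϖ k})
    (f : Fin (n - 1) → ℕ) (hf : ∀ j, 1 ≤ f j ∧ f j ≤ n - 1) :
    ∃ q : ℚ, 0 ≤ q ∧
      Ideal.Quotient.mk I (∏ j, ϖ (f j)) =
        (q : ℝ) • Ideal.Quotient.mk I (∏ k ∈ Finset.Icc 1 (n - 1), ϖ k) := by
  classical
  set m₀ : Multiset ℕ := Multiset.map f Finset.univ.val with hm₀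
  have hcard : Multiset.card m₀ = n - 1 := by
    rw [hm₀, Multiset.card_map]
    simp
  have hmem : ∀ x ∈ m₀, 1 ≤ x ∧ x ≤ n - 1 := by
    intro x hx
    obtain ⟨j, _, rfl⟩ := Multiset.mem_map.mp hx
    exact hf j
  obtain ⟨q, hq0, hqI⟩ := main hn ϖ hϖ I hI m₀ hcard hmem
  refine ⟨q, hq0, ?_⟩
  have h1 : ∏ j, ϖ (f j) = P ϖ m₀ := by
    rw [Finset.prod_eq_multiset_prod, P, hm₀, Multiset.map_map]
    rfl
  have h2 : ∏ k ∈ Finset.Icc 1 (n - 1), ϖ k = P ϖ (sqfm n) := by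
    rw [Finset.prod_eq_multiset_prod, P, sqfm]
  rw [h1, h2]
  have h3 : Ideal.Quotient.mk I ((q : ℝ) • P ϖ (sqfm n))
      = (q : ℝ) • Ideal.Quotient.mk I (P ϖ (sqfm n)) := by
    rw [← Ideal.Quotient.mkₐ_eq_mk ℝ I]
    exact map_smul _ _ _
  rw [← h3, Ideal.Quotient.eq]
  exact hqI
end
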